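/- arXiv:1008.2504 — 5 statements merged into one kernel-verified Lean document; each statement's English description precedes it below -/
import Mathlib

section
/- Let R : B ⊗ A → A ⊗ B be a quasitriangular and normal k-linear map. Then the vector space A ⊗ B equipped with the multiplication (a ⊗ b)(a' ⊗ b') := (m_A ⊗ m_B)(a ⊗ R(b ⊗ a') ⊗ b') (i.e. "a · R(b ⊗ a') · b'") is a unital associative k-algebra with unit 1_A ⊗ 1_B; this algebra is the smash product algebra A #_R B. -/
open TensorProduct

/-- A linear map `R : B ⊗ A → A ⊗ B` is *quasitriangular* if
`R∘(m_B ⊗ id_A) = (id_A ⊗ m_B)∘(R ⊗ id_B)∘(id_B ⊗ R)` (as maps `B ⊗ B ⊗ A → A ⊗ B`) and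
`R∘(id_B ⊗ m_A) = (m_A ⊗ id_B)∘(id_A ⊗ R)∘(R ⊗ id_A)` (as maps `B ⊗ A ⊗ A → A ⊗ B`),
with the evident associators inserted. -/
def Quasitriangular (k A B : Type) [Field k] [Ring A] [Algebra k A] [Ring B] [Algebra k B]
    (R : B ⊗[k] A →ₗ[k] A ⊗[k] B) : Prop :=
  (R ∘ₗ LinearMap.rTensor A (LinearMap.mul' k B)
      = LinearMap.lTensor A (LinearMap.mul' k B)
        ∘ₗ (TensorProduct.assoc k A B B).toLinearMap
        ∘ₗ LinearMap.rTensor B R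
        ∘ₗ (TensorProduct.assoc k B A B).symm.toLinearMap
        ∘ₗ LinearMap.lTensor B R
        ∘ₗ (TensorProduct.assoc k B B A).toLinearMap)
  ∧ (R ∘ₗ LinearMap.lTensor B (LinearMap.mul' k A)
      = LinearMap.rTensor B (LinearMap.mul' k A)
        ∘ₗ (TensorProduct.assoc k A A B).symm.toLinearMap
        ∘ₗ LinearMap.lTensor A R
        ∘ₗ (TensorProduct.assoc k A B A).toLinearMap
        ∘ₗ LinearMap.rTensor A R
        ∘ₗ (TensorProduct.assoc k B A A).symm.toLinearMap)

/-- A linear map `R : B ⊗ A → A ⊗ B` is *normal* if `R(1_B ⊗ a) = a ⊗ 1_B` and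
`R(b ⊗ 1_A) = 1_A ⊗ b`. -/
def RNormal (k A B : Type) [Field k] [Ring A] [Algebra k A] [Ring B] [Algebra k B]
    (R : B ⊗[k] A →ₗ[k] A ⊗[k] B) : Prop :=
  (∀ a : A, R ((1 : B) ⊗ₜ[k] a) = a ⊗ₜ[k] (1 : B))
  ∧ (∀ b : B, R (b ⊗ₜ[k] (1 : A)) = (1 : A) ⊗ₜ[k] b)

/-- The multiplication `(a ⊗ b)(a' ⊗ b') = (m_A ⊗ m_B)(a ⊗ R(b ⊗ a') ⊗ b')` of the smash
product algebra `A #_R B`, as a linear map `(A ⊗ B) ⊗ (A ⊗ B) → A ⊗ B`. -/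
noncomputable def smashMul (k A B : Type) [Field k] [Ring A] [Algebra k A] [Ring B] [Algebra k B]
    (R : B ⊗[k] A →ₗ[k] A ⊗[k] B) :
    ((A ⊗[k] B) ⊗[k] (A ⊗[k] B)) →ₗ[k] A ⊗[k] B :=
  TensorProduct.map (LinearMap.mul' k A) (LinearMap.mul' k B)
  ∘ₗ (TensorProduct.assoc k A A (B ⊗[k] B)).symm.toLinearMap
  ∘ₗ LinearMap.lTensor A ((TensorProduct.assoc k A B B).toLinearMap)
  ∘ₗ LinearMap.lTensor A (LinearMap.rTensor B R)
  ∘ₗ LinearMap.lTensor A ((TensorProduct.assoc k B A B).symm.toLinearMap)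
  ∘ₗ (TensorProduct.assoc k A B (A ⊗[k] B)).toLinearMap


set_option synthInstance.maxHeartbeats 1000000
set_option maxHeartbeats 2000000

section SmashAux
variable {k A B : Type} [Field k] [Ring A] [Algebra k A] [Ring B] [Algebra k B]
    {R : B ⊗[k] A →ₗ[k] A ⊗[k] B}

lemma smash_tmul (a a' : A) (b b' : B) :
    smashMul k A B R ((a ⊗ₜ[k] b) ⊗ₜ[k] (a' ⊗ₜ[k] b'))
      = TensorProduct.map (LinearMap.mulLeft k a) (LinearMap.mulRight k b') (R (b ⊗ₜ[k] a')) := by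
  simp only [smashMul, LinearMap.coe_comp, Function.comp_apply, LinearEquiv.coe_coe,
    assoc_tmul, assoc_symm_tmul, LinearMap.lTensor_tmul, LinearMap.rTensor_tmul]
  generalize R (b ⊗ₜ[k] a') = z
  induction z using TensorProduct.induction_on with
  | zero => simp
  | tmul c d => simp [LinearMap.mul'_apply]
  | add u v hu hv => simp_all [tmul_add, add_tmul]

lemma qt1_pt (h : Quasitriangular k A B R) (b b' : B) (a : A) :
    R ((b * b') ⊗ₜ[k] a)
      = LinearMap.lTensor A (LinearMap.mul' k B)
          ((TensorProduct.assoc k A B B)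
            (LinearMap.rTensor B R
              ((TensorProduct.assoc k B A B).symm (b ⊗ₜ[k] R (b' ⊗ₜ[k] a))))) := by
  have := LinearMap.congr_fun h.1 ((b ⊗ₜ[k] b') ⊗ₜ[k] a)
  simpa [LinearMap.mul'_apply] using this

lemma qt2_pt (h : Quasitriangular k A B R) (b : B) (a a' : A) :
    R (b ⊗ₜ[k] (a * a'))
      = LinearMap.rTensor B (LinearMap.mul' k A)
          ((TensorProduct.assoc k A A B).symm
            (LinearMap.lTensor A R
              ((TensorProduct.assoc k A B A) (R (b ⊗ₜ[k] a) ⊗ₜ[k] a')))) := by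
  have := LinearMap.congr_fun h.2 (b ⊗ₜ[k] (a ⊗ₜ[k] a'))
  simpa [LinearMap.mul'_apply] using this

lemma claimA (h : Quasitriangular k A B R) (a a' : A) (b : B) (b'' : B) (z : A ⊗[k] B) :
    smashMul k A B R ((a ⊗ₜ[k] b) ⊗ₜ[k]
        (TensorProduct.map (LinearMap.mulLeft k a') (LinearMap.mulRight k b'') z))
      = TensorProduct.map (LinearMap.mulLeft k a) (LinearMap.mulRight k b'')
          (smashMul k A B R (R (b ⊗ₜ[k] a') ⊗ₜ[k] z)) := by
  induction z using TensorProduct.induction_on with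
  | zero => simp
  | add u v hu hv => simp_all [tmul_add]
  | tmul c d =>
    simp only [map_tmul, LinearMap.mulLeft_apply, LinearMap.mulRight_apply, smash_tmul]
    rw [qt2_pt h]
    generalize R (b ⊗ₜ[k] a') = w
    induction w using TensorProduct.induction_on with
    | zero => simp
    | add u v hu hv => simp_all [add_tmul, tmul_add]
    | tmul e f =>
      simp only [assoc_tmul, LinearMap.lTensor_tmul, smash_tmul]
      generalize R (f ⊗ₜ[k] c) = u
      induction u using TensorProduct.induction_on with
      | zero => simp
      | add u v hu hv => simp_all [tmul_add, add_tmul]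
      | tmul g h' =>
        simp [LinearMap.mul'_apply, mul_assoc]

lemma claimB (h : Quasitriangular k A B R) (a a'' : A) (b' b'' : B) (w : A ⊗[k] B) :
    smashMul k A B R ((TensorProduct.map (LinearMap.mulLeft k a) (LinearMap.mulRight k b') w)
        ⊗ₜ[k] (a'' ⊗ₜ[k] b''))
      = TensorProduct.map (LinearMap.mulLeft k a) (LinearMap.mulRight k b'')
          (smashMul k A B R (w ⊗ₜ[k] R (b' ⊗ₜ[k] a''))) := by
  induction w using TensorProduct.induction_on with
  | zero => simp
  | add u v hu hv => simp_all [add_tmul, tmul_add]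
  | tmul e f =>
    simp only [map_tmul, LinearMap.mulLeft_apply, LinearMap.mulRight_apply, smash_tmul]
    rw [qt1_pt h]
    generalize R (b' ⊗ₜ[k] a'') = z
    induction z using TensorProduct.induction_on with
    | zero => simp
    | add u v hu hv => simp_all [tmul_add, add_tmul]
    | tmul c d =>
      simp only [assoc_symm_tmul, LinearMap.rTensor_tmul, smash_tmul]
      generalize R (f ⊗ₜ[k] c) = u
      induction u using TensorProduct.induction_on with
      | zero => simp
      | add u v hu hv => simp_all [tmul_add, add_tmul]
      | tmul g h' =>
        simp [LinearMap.mul'_apply, mul_assoc]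

lemma smash_assoc_pure (h : Quasitriangular k A B R) (a a' a'' : A) (b b' b'' : B) :
    smashMul k A B R ((a ⊗ₜ[k] b) ⊗ₜ[k]
        smashMul k A B R ((a' ⊗ₜ[k] b') ⊗ₜ[k] (a'' ⊗ₜ[k] b'')))
      = smashMul k A B R ((smashMul k A B R ((a ⊗ₜ[k] b) ⊗ₜ[k] (a' ⊗ₜ[k] b')))
          ⊗ₜ[k] (a'' ⊗ₜ[k] b'')) := by
  rw [smash_tmul a' a'' b' b'', claimA h, smash_tmul a a' b b', claimB h]

end SmashAux

/-- If `R : B ⊗ A → A ⊗ B` is quasitriangular and normal, then `A ⊗ B` with the multiplication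
`(a ⊗ b)(a' ⊗ b') = a · R(b ⊗ a') · b'` is a unital associative algebra with unit `1_A ⊗ 1_B`
(the smash product algebra `A #_R B`). -/
theorem smash_product_is_unital_associative_algebra
    (k A B : Type) [Field k] [Ring A] [Algebra k A] [Ring B] [Algebra k B]
    (R : B ⊗[k] A →ₗ[k] A ⊗[k] B)
    (hqt : Quasitriangular k A B R) (hn : RNormal k A B R) :
    (∀ x : A ⊗[k] B, smashMul k A B R (((1 : A) ⊗ₜ[k] (1 : B)) ⊗ₜ[k] x) = x)
    ∧ (∀ x : A ⊗[k] B, smashMul k A B R (x ⊗ₜ[k] ((1 : A) ⊗ₜ[k] (1 : B))) = x)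
    ∧ (smashMul k A B R ∘ₗ LinearMap.lTensor (A ⊗[k] B) (smashMul k A B R)
        = smashMul k A B R ∘ₗ LinearMap.rTensor (A ⊗[k] B) (smashMul k A B R)
          ∘ₗ (TensorProduct.assoc k (A ⊗[k] B) (A ⊗[k] B) (A ⊗[k] B)).symm.toLinearMap) := by
  obtain ⟨hn1, hn2⟩ := hn
  refine ⟨?_, ?_, ?_⟩
  · intro x
    induction x using TensorProduct.induction_on with
    | zero => simp
    | add u v hu hv => simp_all [tmul_add]
    | tmul a b => simp [smash_tmul, hn1]
  · intro x
    induction x using TensorProduct.induction_on with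
    | zero => simp
    | add u v hu hv => simp_all [add_tmul]
    | tmul a b => simp [smash_tmul, hn2]
  · apply TensorProduct.ext'
    intro x y
    simp only [LinearMap.coe_comp, Function.comp_apply, LinearEquiv.coe_coe]
    induction y using TensorProduct.induction_on with
    | zero => simp
    | add u v hu hv => simp_all [tmul_add]
    | tmul u v =>
      simp only [LinearMap.lTensor_tmul, assoc_symm_tmul, LinearMap.rTensor_tmul]
      induction x using TensorProduct.induction_on with
      | zero => simp [zero_tmul]
      | add x1 x2 h1 h2 => simp_all [add_tmul]
      | tmul a b =>
        induction u using TensorProduct.induction_on with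
        | zero => simp [zero_tmul, tmul_zero]
        | add u1 u2 h1 h2 => simp_all [add_tmul, tmul_add]
        | tmul a' b' =>
          induction v using TensorProduct.induction_on with
          | zero => simp [tmul_zero]
          | add v1 v2 h1 h2 => simp_all [tmul_add, add_tmul]
          | tmul a'' b'' => exact smash_assoc_pure hqt a a' a'' b b' b''
end

section
/- For all p, q ≥ 0: (1) for every 0 ≤ j < q, d̄_j ∘ t_{p,q} = t_{p,q−1} ∘ d̄_j as maps B^{⊗(p+1)} ⊗ A^{⊗(q+1)} → B^{⊗(p+1)} ⊗ A^{⊗q}, where d̄_j multiplies the j-th and (j+1)-th A-factors (0-indexed: a_j and a_{j+1}) using m_A; and (2) for every 0 ≤ i < p, d_i ∘ t̄_{p,q} = t̄_{p−1,q} ∘ d_i as maps B^{⊗(p+1)} ⊗ A^{⊗(q+1)} → B^{⊗p} ⊗ A^{⊗(q+1)}, where d_i multiplies the i-th and (i+1)-th B-factors (b_i and b_{i+1}) using m_B. -/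
open TensorProduct

variable (k : Type) [Field k]

/-- `Tpow k M n` is the `(n+1)`-fold tensor power `M ⊗ M ⊗ ⋯ ⊗ M`. -/
noncomputable def Tpow (M : ModuleCat.{0} k) : ℕ → ModuleCat.{0} k
  | 0 => M
  | (n+1) => ModuleCat.of k (↥M ⊗[k] ↥(Tpow M n))

/-- moving the last tensor factor out: `M^{⊗(n+2)} ≃ M^{⊗(n+1)} ⊗ M`. -/
noncomputable def ePow (M : ModuleCat.{0} k) : ∀ n : ℕ,
    (↥(Tpow k M (n+1)) ≃ₗ[k] ↥(Tpow k M n) ⊗[k] ↥M)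
  | 0 => LinearEquiv.refl k (↥M ⊗[k] ↥M)
  | (n+1) => (TensorProduct.congr (LinearEquiv.refl k ↥M) (ePow M n)).trans
      (TensorProduct.assoc k ↥M ↥(Tpow k M n) ↥M).symm

variable (A B : Type) [Ring A] [Algebra k A] [Ring B] [Algebra k B]

/-- The `(q+1)`-fold tensor power of `A`. -/
noncomputable abbrev TA (q : ℕ) : Type := ↥(Tpow k (ModuleCat.of k A) q)
/-- The `(p+1)`-fold tensor power of `B`. -/
noncomputable abbrev TB (p : ℕ) : Type := ↥(Tpow k (ModuleCat.of k B) p)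

variable {k A B}

/-- `Θ_q = R_{q+1,q+2} ∘ ⋯ ∘ R_{2,3} ∘ R_{1,2} : B ⊗ A^{⊗(q+1)} → A^{⊗(q+1)} ⊗ B`. -/
noncomputable def Theta (R : B ⊗[k] A →ₗ[k] A ⊗[k] B) :
    ∀ q : ℕ, (B ⊗[k] TA k A q) →ₗ[k] (TA k A q ⊗[k] B)
  | 0 => R
  | (q+1) =>
      (TensorProduct.assoc k A (TA k A q) B).symm.toLinearMap
      ∘ₗ LinearMap.lTensor A (Theta R q)
      ∘ₗ (TensorProduct.assoc k A B (TA k A q)).toLinearMap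
      ∘ₗ LinearMap.rTensor (TA k A q) R
      ∘ₗ (TensorProduct.assoc k B A (TA k A q)).symm.toLinearMap

/-- `Γ_p = R⁻¹_{p+1,p+2} ∘ ⋯ ∘ R⁻¹_{2,3} ∘ R⁻¹_{1,2} : A ⊗ B^{⊗(p+1)} → B^{⊗(p+1)} ⊗ A`. -/
noncomputable def Gamma (Ri : A ⊗[k] B →ₗ[k] B ⊗[k] A) :
    ∀ p : ℕ, (A ⊗[k] TB k B p) →ₗ[k] (TB k B p ⊗[k] A)
  | 0 => Ri
  | (p+1) =>
      (TensorProduct.assoc k B (TB k B p) A).symm.toLinearMap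
      ∘ₗ LinearMap.lTensor B (Gamma Ri p)
      ∘ₗ (TensorProduct.assoc k B A (TB k B p)).toLinearMap
      ∘ₗ LinearMap.rTensor (TB k B p) Ri
      ∘ₗ (TensorProduct.assoc k A B (TB k B p)).symm.toLinearMap

/-- The paracyclic operator `t_{p,q} = σ ∘ (id_B^{⊗p} ⊗ Θ_q)` on `B^{⊗(p+1)} ⊗ A^{⊗(q+1)}`,
where `σ` cyclically moves the last tensor factor (which lies in `B`) to the front. -/
noncomputable def tOp (R : B ⊗[k] A →ₗ[k] A ⊗[k] B) :
    ∀ (p q : ℕ), (TB k B p ⊗[k] TA k A q) →ₗ[k] (TB k B p ⊗[k] TA k A q)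
  | 0, q => (TensorProduct.comm k (TA k A q) B).toLinearMap ∘ₗ Theta R q
  | (p+1), q =>
      (TensorProduct.assoc k B (TB k B p) (TA k A q)).symm.toLinearMap
      ∘ₗ (TensorProduct.comm k (TB k B p ⊗[k] TA k A q) B).toLinearMap
      ∘ₗ (TensorProduct.assoc k (TB k B p) (TA k A q) B).symm.toLinearMap
      ∘ₗ LinearMap.lTensor (TB k B p) (Theta R q)
      ∘ₗ (TensorProduct.assoc k (TB k B p) B (TA k A q)).toLinearMap
      ∘ₗ LinearMap.rTensor (TA k A q) (ePow k (ModuleCat.of k B) p).toLinearMap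

/-- The paracyclic operator `t̄_{p,q}` on `B^{⊗(p+1)} ⊗ A^{⊗(q+1)}`, given by
`t̄(b₀⊗⋯⊗b_p⊗a₀⊗⋯⊗a_q) = Γ_p(a_q ⊗ b₀⊗⋯⊗b_p) ⊗ a₀⊗⋯⊗a_{q−1}`. -/
noncomputable def tbarOp (Ri : A ⊗[k] B →ₗ[k] B ⊗[k] A) :
    ∀ (p q : ℕ), (TB k B p ⊗[k] TA k A q) →ₗ[k] (TB k B p ⊗[k] TA k A q)
  | p, 0 => Gamma Ri p ∘ₗ (TensorProduct.comm k (TB k B p) A).toLinearMap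
  | p, (q+1) =>
      (TensorProduct.assoc k (TB k B p) A (TA k A q)).toLinearMap
      ∘ₗ LinearMap.rTensor (TA k A q) (Gamma Ri p)
      ∘ₗ (TensorProduct.assoc k A (TB k B p) (TA k A q)).symm.toLinearMap
      ∘ₗ (TensorProduct.comm k (TB k B p ⊗[k] TA k A q) A).toLinearMap
      ∘ₗ (TensorProduct.assoc k (TB k B p) (TA k A q) A).symm.toLinearMap
      ∘ₗ LinearMap.lTensor (TB k B p) (ePow k (ModuleCat.of k A) q).toLinearMap

/-- Multiplication of the first two tensor factors of `M^{⊗(n+2)}`. -/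
noncomputable def mulFirst (k A : Type) [Field k] [Ring A] [Algebra k A] :
    ∀ n : ℕ, TA k A (n+1) →ₗ[k] TA k A n
  | 0 => LinearMap.mul' k A
  | (n+1) => LinearMap.rTensor (TA k A n) (LinearMap.mul' k A)
      ∘ₗ (TensorProduct.assoc k A A (TA k A n)).symm.toLinearMap

/-- `dmul k A n j` multiplies the `j`-th and `(j+1)`-th tensor factors (`0`-indexed) of
`A^{⊗(n+2)}`, producing an element of `A^{⊗(n+1)}` (it is the simplicial face map `d_j`
for `0 ≤ j ≤ n`; for out-of-range `j` it is defined to be `0`). -/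
noncomputable def dmul (k A : Type) [Field k] [Ring A] [Algebra k A] :
    ∀ (n j : ℕ), TA k A (n+1) →ₗ[k] TA k A n
  | n, 0 => mulFirst k A n
  | 0, (_+1) => 0
  | (n+1), (j+1) => LinearMap.lTensor A (dmul k A n j)


section FMCAux
open LinearMap

variable {M N P Q X Y Z : Type}
  [AddCommGroup M] [Module k M] [AddCommGroup N] [Module k N]
  [AddCommGroup P] [Module k P] [AddCommGroup Q] [Module k Q]
  [AddCommGroup X] [Module k X] [AddCommGroup Y] [Module k Y]
  [AddCommGroup Z] [Module k Z]
theorem aNat₁ (f : M →ₗ[k] N) :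
    (TensorProduct.assoc k N P Q).toLinearMap ∘ₗ rTensor Q (rTensor P f)
      = rTensor (P ⊗[k] Q) f ∘ₗ (TensorProduct.assoc k M P Q).toLinearMap := by
  ext m p q; simp

theorem aNat₂ (f : M →ₗ[k] N) :
    (TensorProduct.assoc k P N Q).toLinearMap ∘ₗ rTensor Q (lTensor P f)
      = lTensor P (rTensor Q f) ∘ₗ (TensorProduct.assoc k P M Q).toLinearMap := by
  ext p m q; simp

theorem aNat₃ (f : M →ₗ[k] N) :
    (TensorProduct.assoc k P Q N).toLinearMap ∘ₗ lTensor (P ⊗[k] Q) f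
      = lTensor P (lTensor Q f) ∘ₗ (TensorProduct.assoc k P Q M).toLinearMap := by
  ext p q m; simp

theorem aSymmNat₁ (f : M →ₗ[k] N) :
    (TensorProduct.assoc k N P Q).symm.toLinearMap ∘ₗ rTensor (P ⊗[k] Q) f
      = rTensor Q (rTensor P f) ∘ₗ (TensorProduct.assoc k M P Q).symm.toLinearMap := by
  ext m p q; simp

theorem aSymmNat₂ (f : M →ₗ[k] N) :
    (TensorProduct.assoc k P N Q).symm.toLinearMap ∘ₗ lTensor P (rTensor Q f)
      = rTensor Q (lTensor P f) ∘ₗ (TensorProduct.assoc k P M Q).symm.toLinearMap := by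
  ext p m q; simp

theorem aSymmNat₃ (f : M →ₗ[k] N) :
    (TensorProduct.assoc k P Q N).symm.toLinearMap ∘ₗ lTensor P (lTensor Q f)
      = lTensor (P ⊗[k] Q) f ∘ₗ (TensorProduct.assoc k P Q M).symm.toLinearMap := by
  ext p q m; simp

theorem cNat (f : M →ₗ[k] N) :
    (TensorProduct.comm k N P).toLinearMap ∘ₗ rTensor P f
      = lTensor P f ∘ₗ (TensorProduct.comm k M P).toLinearMap := by
  ext m p; simp

theorem mapComm (f : M →ₗ[k] N) (g : P →ₗ[k] Q) :
    lTensor N g ∘ₗ rTensor P f = rTensor Q f ∘ₗ lTensor M g := by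
  ext m p; simp

-- applied versions
theorem aNat₁' (f : M →ₗ[k] N) (u : (M ⊗[k] P) ⊗[k] Q) :
    rTensor (P ⊗[k] Q) f (TensorProduct.assoc k M P Q u)
      = TensorProduct.assoc k N P Q (rTensor Q (rTensor P f) u) := by
  simpa using (LinearMap.congr_fun (aNat₁ f) u).symm

theorem aNat₂' (f : M →ₗ[k] N) (u : (P ⊗[k] M) ⊗[k] Q) :
    lTensor P (rTensor Q f) (TensorProduct.assoc k P M Q u)
      = TensorProduct.assoc k P N Q (rTensor Q (lTensor P f) u) := by
  simpa using (LinearMap.congr_fun (aNat₂ f) u).symm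

theorem aNat₃' (f : M →ₗ[k] N) (u : (P ⊗[k] Q) ⊗[k] M) :
    lTensor P (lTensor Q f) (TensorProduct.assoc k P Q M u)
      = TensorProduct.assoc k P Q N (lTensor (P ⊗[k] Q) f u) := by
  simpa using (LinearMap.congr_fun (aNat₃ f) u).symm

theorem aSymmNat₁' (f : M →ₗ[k] N) (u : M ⊗[k] (P ⊗[k] Q)) :
    rTensor Q (rTensor P f) ((TensorProduct.assoc k M P Q).symm u)
      = (TensorProduct.assoc k N P Q).symm (rTensor (P ⊗[k] Q) f u) := by
  simpa using (LinearMap.congr_fun (aSymmNat₁ f) u).symm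

theorem aSymmNat₂' (f : M →ₗ[k] N) (u : P ⊗[k] (M ⊗[k] Q)) :
    rTensor Q (lTensor P f) ((TensorProduct.assoc k P M Q).symm u)
      = (TensorProduct.assoc k P N Q).symm (lTensor P (rTensor Q f) u) := by
  simpa using (LinearMap.congr_fun (aSymmNat₂ f) u).symm

theorem aSymmNat₃' (f : M →ₗ[k] N) (u : P ⊗[k] (Q ⊗[k] M)) :
    lTensor (P ⊗[k] Q) f ((TensorProduct.assoc k P Q M).symm u)
      = (TensorProduct.assoc k P Q N).symm (lTensor P (lTensor Q f) u) := by
  simpa using (LinearMap.congr_fun (aSymmNat₃ f) u).symm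

theorem cNat' (f : M →ₗ[k] N) (u : M ⊗[k] P) :
    lTensor P f (TensorProduct.comm k M P u)
      = TensorProduct.comm k N P (rTensor P f u) := by
  simpa using (LinearMap.congr_fun (cNat f) u).symm

theorem mapComm' (f : M →ₗ[k] N) (g : P →ₗ[k] Q) (u : M ⊗[k] P) :
    lTensor N g (rTensor P f u) = rTensor Q f (lTensor M g u) :=
  LinearMap.congr_fun (mapComm f g) u

theorem mapComm'' (f : M →ₗ[k] N) (g : P →ₗ[k] Q) (u : M ⊗[k] P) :
    rTensor Q f (lTensor M g u) = lTensor N g (rTensor P f u) :=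
  (mapComm' f g u).symm


/-- pentagon: `α⁻¹_{X,Y,Z⊗M}` as a composite. -/
theorem pent (z : X ⊗[k] (Y ⊗[k] (Z ⊗[k] M))) :
    (TensorProduct.assoc k X Y (Z ⊗[k] M)).symm z
      = TensorProduct.assoc k (X ⊗[k] Y) Z M
          (rTensor M (TensorProduct.assoc k X Y Z).symm.toLinearMap
            ((TensorProduct.assoc k X (Y ⊗[k] Z) M).symm
              (lTensor X (TensorProduct.assoc k Y Z M).symm.toLinearMap z))) := by
  have h : ((TensorProduct.assoc k X Y (Z ⊗[k] M)).symm.toLinearMap : _ →ₗ[k] _)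
      = (TensorProduct.assoc k (X ⊗[k] Y) Z M).toLinearMap
        ∘ₗ rTensor M (TensorProduct.assoc k X Y Z).symm.toLinearMap
        ∘ₗ (TensorProduct.assoc k X (Y ⊗[k] Z) M).symm.toLinearMap
        ∘ₗ lTensor X (TensorProduct.assoc k Y Z M).symm.toLinearMap := by
    ext x y zz m; simp
  simpa using LinearMap.congr_fun h z

theorem S₁ (v : ((X ⊗[k] Y) ⊗[k] Z) ⊗[k] M) :
    lTensor X (TensorProduct.assoc k Y Z M).symm.toLinearMap
        (TensorProduct.assoc k X Y (Z ⊗[k] M)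
          (TensorProduct.assoc k (X ⊗[k] Y) Z M v))
      = TensorProduct.assoc k X (Y ⊗[k] Z) M
          (rTensor M (TensorProduct.assoc k X Y Z).toLinearMap v) := by
  have h : (lTensor X (TensorProduct.assoc k Y Z M).symm.toLinearMap
        ∘ₗ (TensorProduct.assoc k X Y (Z ⊗[k] M)).toLinearMap
        ∘ₗ (TensorProduct.assoc k (X ⊗[k] Y) Z M).toLinearMap : _ →ₗ[k] _)
      = (TensorProduct.assoc k X (Y ⊗[k] Z) M).toLinearMap
        ∘ₗ rTensor M (TensorProduct.assoc k X Y Z).toLinearMap := by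
    ext x y zz m; simp
  simpa using LinearMap.congr_fun h v


theorem S₂ (v : (A ⊗[k] (A ⊗[k] X)) ⊗[k] M) :
    rTensor (X ⊗[k] M) (LinearMap.mul' k A)
        ((TensorProduct.assoc k A A (X ⊗[k] M)).symm
          (lTensor A (TensorProduct.assoc k A X M).toLinearMap
            (TensorProduct.assoc k A (A ⊗[k] X) M v)))
      = TensorProduct.assoc k A X M
          (rTensor M (rTensor X (LinearMap.mul' k A))
            (rTensor M (TensorProduct.assoc k A A X).symm.toLinearMap v)) := by
  have h : (rTensor (X ⊗[k] M) (LinearMap.mul' k A)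
        ∘ₗ (TensorProduct.assoc k A A (X ⊗[k] M)).symm.toLinearMap
        ∘ₗ lTensor A (TensorProduct.assoc k A X M).toLinearMap
        ∘ₗ (TensorProduct.assoc k A (A ⊗[k] X) M).toLinearMap : _ →ₗ[k] _)
      = (TensorProduct.assoc k A X M).toLinearMap
        ∘ₗ rTensor M (rTensor X (LinearMap.mul' k A))
        ∘ₗ rTensor M (TensorProduct.assoc k A A X).symm.toLinearMap := by
    ext a a' x m; simp
  simpa using LinearMap.congr_fun h v

theorem S₃ (v : A ⊗[k] (A ⊗[k] (M ⊗[k] X))) :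
    rTensor X (rTensor M (LinearMap.mul' k A))
        (rTensor X (TensorProduct.assoc k A A M).symm.toLinearMap
          ((TensorProduct.assoc k A (A ⊗[k] M) X).symm
            (lTensor A (TensorProduct.assoc k A M X).symm.toLinearMap v)))
      = (TensorProduct.assoc k A M X).symm
          (rTensor (M ⊗[k] X) (LinearMap.mul' k A)
            ((TensorProduct.assoc k A A (M ⊗[k] X)).symm v)) := by
  have h : (rTensor X (rTensor M (LinearMap.mul' k A))
        ∘ₗ rTensor X (TensorProduct.assoc k A A M).symm.toLinearMap
        ∘ₗ (TensorProduct.assoc k A (A ⊗[k] M) X).symm.toLinearMap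
        ∘ₗ lTensor A (TensorProduct.assoc k A M X).symm.toLinearMap : _ →ₗ[k] _)
      = (TensorProduct.assoc k A M X).symm.toLinearMap
        ∘ₗ rTensor (M ⊗[k] X) (LinearMap.mul' k A)
        ∘ₗ (TensorProduct.assoc k A A (M ⊗[k] X)).symm.toLinearMap := by
    ext a a' m x; simp
  simpa using LinearMap.congr_fun h v



section KeyAux
open LinearMap
variable {M : Type} [AddCommGroup M] [Module k M]

theorem dagger' (Θ : B ⊗[k] M →ₗ[k] M ⊗[k] B) (u : A ⊗[k] (A ⊗[k] (B ⊗[k] M))) :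
    rTensor B (rTensor M (LinearMap.mul' k A))
        (rTensor B (TensorProduct.assoc k A A M).symm.toLinearMap
          ((TensorProduct.assoc k A (A ⊗[k] M) B).symm
            (lTensor A (TensorProduct.assoc k A M B).symm.toLinearMap
              (lTensor A (lTensor A Θ) u))))
      = (TensorProduct.assoc k A M B).symm
          (lTensor A Θ
            (rTensor (B ⊗[k] M) (LinearMap.mul' k A)
              ((TensorProduct.assoc k A A (B ⊗[k] M)).symm u))) := by
  rw [mapComm' (LinearMap.mul' k A) Θ, aSymmNat₃' Θ]
  exact S₃ (lTensor A (lTensor A Θ) u)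

theorem star' (R : B ⊗[k] A →ₗ[k] A ⊗[k] B)
    (hR : R ∘ₗ lTensor B (LinearMap.mul' k A)
      = rTensor B (LinearMap.mul' k A)
        ∘ₗ (TensorProduct.assoc k A A B).symm.toLinearMap
        ∘ₗ lTensor A R
        ∘ₗ (TensorProduct.assoc k A B A).toLinearMap
        ∘ₗ rTensor A R
        ∘ₗ (TensorProduct.assoc k B A A).symm.toLinearMap)
    (z : B ⊗[k] (A ⊗[k] (A ⊗[k] M))) :
    TensorProduct.assoc k A B M
        (rTensor M R
          ((TensorProduct.assoc k B A M).symm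
            (lTensor B (rTensor M (LinearMap.mul' k A))
              (lTensor B (TensorProduct.assoc k A A M).symm.toLinearMap z))))
      = rTensor (B ⊗[k] M) (LinearMap.mul' k A)
          ((TensorProduct.assoc k A A (B ⊗[k] M)).symm
            (lTensor A (TensorProduct.assoc k A B M).toLinearMap
              (lTensor A (rTensor M R)
                (lTensor A (TensorProduct.assoc k B A M).symm.toLinearMap
                  (TensorProduct.assoc k A B (A ⊗[k] M)
                    (rTensor (A ⊗[k] M) R
                      ((TensorProduct.assoc k B A (A ⊗[k] M)).symm z))))))) := by
  -- left-hand side: combine the two `A`-factors using `hR`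
  rw [← aSymmNat₂' (LinearMap.mul' k A), ← rTensor_comp_apply, hR]
  simp only [LinearMap.rTensor_comp, LinearMap.comp_apply]
  -- right-hand side: normalize
  rw [pent z, aNat₁' R, S₁, aNat₂' R, S₂]

theorem key0 (R : B ⊗[k] A →ₗ[k] A ⊗[k] B)
    (hR : R ∘ₗ lTensor B (LinearMap.mul' k A)
      = rTensor B (LinearMap.mul' k A)
        ∘ₗ (TensorProduct.assoc k A A B).symm.toLinearMap
        ∘ₗ lTensor A R
        ∘ₗ (TensorProduct.assoc k A B A).toLinearMap
        ∘ₗ rTensor A R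
        ∘ₗ (TensorProduct.assoc k B A A).symm.toLinearMap)
    (Θ : B ⊗[k] M →ₗ[k] M ⊗[k] B) :
    rTensor B (rTensor M (LinearMap.mul' k A) ∘ₗ (TensorProduct.assoc k A A M).symm.toLinearMap)
      ∘ₗ ((TensorProduct.assoc k A (A ⊗[k] M) B).symm.toLinearMap
        ∘ₗ lTensor A ((TensorProduct.assoc k A M B).symm.toLinearMap
            ∘ₗ lTensor A Θ
            ∘ₗ (TensorProduct.assoc k A B M).toLinearMap
            ∘ₗ rTensor M R
            ∘ₗ (TensorProduct.assoc k B A M).symm.toLinearMap)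
        ∘ₗ (TensorProduct.assoc k A B (A ⊗[k] M)).toLinearMap
        ∘ₗ rTensor (A ⊗[k] M) R
        ∘ₗ (TensorProduct.assoc k B A (A ⊗[k] M)).symm.toLinearMap)
    = ((TensorProduct.assoc k A M B).symm.toLinearMap
        ∘ₗ lTensor A Θ
        ∘ₗ (TensorProduct.assoc k A B M).toLinearMap
        ∘ₗ rTensor M R
        ∘ₗ (TensorProduct.assoc k B A M).symm.toLinearMap)
      ∘ₗ lTensor B (rTensor M (LinearMap.mul' k A) ∘ₗ (TensorProduct.assoc k A A M).symm.toLinearMap) := by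
  apply LinearMap.ext; intro z
  simp only [LinearMap.comp_apply, LinearMap.lTensor_comp, LinearMap.rTensor_comp,
    LinearEquiv.coe_coe]
  rw [star' R hR z]
  exact dagger' Θ _

theorem keyTheta (R : B ⊗[k] A →ₗ[k] A ⊗[k] B)
    (hR : R ∘ₗ lTensor B (LinearMap.mul' k A)
      = rTensor B (LinearMap.mul' k A)
        ∘ₗ (TensorProduct.assoc k A A B).symm.toLinearMap
        ∘ₗ lTensor A R
        ∘ₗ (TensorProduct.assoc k A B A).toLinearMap
        ∘ₗ rTensor A R
        ∘ₗ (TensorProduct.assoc k B A A).symm.toLinearMap) :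
    ∀ q j, j ≤ q → rTensor B (dmul k A q j) ∘ₗ Theta R (q+1)
      = Theta R q ∘ₗ lTensor B (dmul k A q j) := by
  intro q
  induction q with
  | zero =>
    intro j hj
    match j, hj with
    | 0, _ => exact hR.symm
  | succ n ih =>
    intro j hj
    match j, hj with
    | 0, _ => exact key0 R hR (Theta R n)
    | (j+1), hj =>
      have ihj := ih j (Nat.le_of_succ_le_succ hj)
      show rTensor B (lTensor A (dmul k A n j))
          ∘ₗ ((TensorProduct.assoc k A (TA k A (n+1)) B).symm.toLinearMap
            ∘ₗ lTensor A (Theta R (n+1))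
            ∘ₗ (TensorProduct.assoc k A B (TA k A (n+1))).toLinearMap
            ∘ₗ rTensor (TA k A (n+1)) R
            ∘ₗ (TensorProduct.assoc k B A (TA k A (n+1))).symm.toLinearMap)
          = Theta R (n+1) ∘ₗ lTensor B (lTensor A (dmul k A n j))
      apply LinearMap.ext; intro z
      simp only [LinearMap.comp_apply, LinearEquiv.coe_coe]
      rw [aSymmNat₂' (dmul k A n j), ← lTensor_comp_apply, ihj, lTensor_comp_apply,
        aNat₃' (dmul k A n j), mapComm' R (dmul k A n j), aSymmNat₃' (dmul k A n j)]
      rfl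

section Assembly
variable {V P X Y Q : Type}
  [AddCommGroup V] [Module k V] [AddCommGroup P] [Module k P]
  [AddCommGroup X] [Module k X] [AddCommGroup Y] [Module k Y]
  [AddCommGroup Q] [Module k Q]

theorem tAux0 (d : X →ₗ[k] Y) (Θ₁ : V ⊗[k] X →ₗ[k] X ⊗[k] V) (Θ₂ : V ⊗[k] Y →ₗ[k] Y ⊗[k] V)
    (hkey : rTensor V d ∘ₗ Θ₁ = Θ₂ ∘ₗ lTensor V d) :
    lTensor V d ∘ₗ ((TensorProduct.comm k X V).toLinearMap ∘ₗ Θ₁)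
      = ((TensorProduct.comm k Y V).toLinearMap ∘ₗ Θ₂) ∘ₗ lTensor V d := by
  apply LinearMap.ext; intro z
  simp only [LinearMap.comp_apply, LinearEquiv.coe_coe]
  have h := LinearMap.congr_fun hkey z
  simp only [LinearMap.comp_apply] at h
  rw [cNat' d, h]

theorem tAux (d : X →ₗ[k] Y) (Θ₁ : V ⊗[k] X →ₗ[k] X ⊗[k] V) (Θ₂ : V ⊗[k] Y →ₗ[k] Y ⊗[k] V)
    (e : (V ⊗[k] P) →ₗ[k] P ⊗[k] V)
    (hkey : rTensor V d ∘ₗ Θ₁ = Θ₂ ∘ₗ lTensor V d) :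
    lTensor (V ⊗[k] P) d
        ∘ₗ ((TensorProduct.assoc k V P X).symm.toLinearMap
          ∘ₗ (TensorProduct.comm k (P ⊗[k] X) V).toLinearMap
          ∘ₗ (TensorProduct.assoc k P X V).symm.toLinearMap
          ∘ₗ lTensor P Θ₁
          ∘ₗ (TensorProduct.assoc k P V X).toLinearMap
          ∘ₗ rTensor X e)
      = ((TensorProduct.assoc k V P Y).symm.toLinearMap
          ∘ₗ (TensorProduct.comm k (P ⊗[k] Y) V).toLinearMap
          ∘ₗ (TensorProduct.assoc k P Y V).symm.toLinearMap
          ∘ₗ lTensor P Θ₂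
          ∘ₗ (TensorProduct.assoc k P V Y).toLinearMap
          ∘ₗ rTensor Y e) ∘ₗ lTensor (V ⊗[k] P) d := by
  apply LinearMap.ext; intro z
  simp only [LinearMap.comp_apply, LinearEquiv.coe_coe]
  rw [aSymmNat₃' d, cNat' (lTensor P d), aSymmNat₂' d, ← lTensor_comp_apply, hkey,
    lTensor_comp_apply, aNat₃' d, mapComm' e d]

theorem tbarAux0 (d : X →ₗ[k] Y) (G₁ : V ⊗[k] X →ₗ[k] X ⊗[k] V) (G₂ : V ⊗[k] Y →ₗ[k] Y ⊗[k] V)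
    (hkey : rTensor V d ∘ₗ G₁ = G₂ ∘ₗ lTensor V d) :
    rTensor V d ∘ₗ (G₁ ∘ₗ (TensorProduct.comm k X V).toLinearMap)
      = (G₂ ∘ₗ (TensorProduct.comm k Y V).toLinearMap) ∘ₗ rTensor V d := by
  apply LinearMap.ext; intro z
  simp only [LinearMap.comp_apply, LinearEquiv.coe_coe]
  have h := LinearMap.congr_fun hkey ((TensorProduct.comm k X V) z)
  simp only [LinearMap.comp_apply] at h
  rw [h, cNat' d]

theorem tbarAux (d : X →ₗ[k] Y) (G₁ : V ⊗[k] X →ₗ[k] X ⊗[k] V) (G₂ : V ⊗[k] Y →ₗ[k] Y ⊗[k] V)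
    (e : (V ⊗[k] Q) →ₗ[k] Q ⊗[k] V)
    (hkey : rTensor V d ∘ₗ G₁ = G₂ ∘ₗ lTensor V d) :
    rTensor (V ⊗[k] Q) d
        ∘ₗ ((TensorProduct.assoc k X V Q).toLinearMap
          ∘ₗ rTensor Q G₁
          ∘ₗ (TensorProduct.assoc k V X Q).symm.toLinearMap
          ∘ₗ (TensorProduct.comm k (X ⊗[k] Q) V).toLinearMap
          ∘ₗ (TensorProduct.assoc k X Q V).symm.toLinearMap
          ∘ₗ lTensor X e)
      = ((TensorProduct.assoc k Y V Q).toLinearMap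
          ∘ₗ rTensor Q G₂
          ∘ₗ (TensorProduct.assoc k V Y Q).symm.toLinearMap
          ∘ₗ (TensorProduct.comm k (Y ⊗[k] Q) V).toLinearMap
          ∘ₗ (TensorProduct.assoc k Y Q V).symm.toLinearMap
          ∘ₗ lTensor Y e) ∘ₗ rTensor (V ⊗[k] Q) d := by
  apply LinearMap.ext; intro z
  simp only [LinearMap.comp_apply, LinearEquiv.coe_coe]
  rw [aNat₁' d, ← rTensor_comp_apply, hkey, rTensor_comp_apply, aSymmNat₂' d,
    cNat' (rTensor Q d), aSymmNat₁' d, mapComm'' d e]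

end Assembly

theorem gammaEqTheta (Ri : A ⊗[k] B →ₗ[k] B ⊗[k] A) :
    ∀ p : ℕ, Gamma Ri p = Theta Ri p := by
  intro p
  induction p with
  | zero => rfl
  | succ p ih =>
    show Gamma Ri (p+1) = Theta Ri (p+1)
    rw [show Gamma Ri (p+1)
        = (TensorProduct.assoc k B (TB k B p) A).symm.toLinearMap
          ∘ₗ lTensor B (Gamma Ri p)
          ∘ₗ (TensorProduct.assoc k B A (TB k B p)).toLinearMap
          ∘ₗ rTensor (TB k B p) Ri
          ∘ₗ (TensorProduct.assoc k A B (TB k B p)).symm.toLinearMap from rfl, ih]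
    rfl

theorem hRinv (R : B ⊗[k] A ≃ₗ[k] A ⊗[k] B)
    (h1 : R.toLinearMap ∘ₗ rTensor A (LinearMap.mul' k B)
      = lTensor A (LinearMap.mul' k B)
        ∘ₗ (TensorProduct.assoc k A B B).toLinearMap
        ∘ₗ rTensor B R.toLinearMap
        ∘ₗ (TensorProduct.assoc k B A B).symm.toLinearMap
        ∘ₗ lTensor B R.toLinearMap
        ∘ₗ (TensorProduct.assoc k B B A).toLinearMap) :
    R.symm.toLinearMap ∘ₗ lTensor A (LinearMap.mul' k B)
      = rTensor A (LinearMap.mul' k B)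
        ∘ₗ (TensorProduct.assoc k B B A).symm.toLinearMap
        ∘ₗ lTensor B R.symm.toLinearMap
        ∘ₗ (TensorProduct.assoc k B A B).toLinearMap
        ∘ₗ rTensor B R.symm.toLinearMap
        ∘ₗ (TensorProduct.assoc k A B B).symm.toLinearMap := by
  have hl : ∀ u : B ⊗[k] (A ⊗[k] B),
      lTensor B R.toLinearMap (lTensor B R.symm.toLinearMap u) = u := by
    intro u; rw [← lTensor_comp_apply]; simp
  have hr : ∀ u : (A ⊗[k] B) ⊗[k] B,
      rTensor B R.toLinearMap (rTensor B R.symm.toLinearMap u) = u := by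
    intro u; rw [← rTensor_comp_apply]; simp
  apply LinearMap.ext; intro z
  simp only [LinearMap.comp_apply, LinearEquiv.coe_coe]
  apply R.injective
  rw [LinearEquiv.apply_symm_apply]
  have h := LinearMap.congr_fun h1
    ((TensorProduct.assoc k B B A).symm
      (lTensor B R.symm.toLinearMap
        ((TensorProduct.assoc k B A B)
          (rTensor B R.symm.toLinearMap ((TensorProduct.assoc k A B B).symm z)))))
  simp only [LinearMap.comp_apply, LinearEquiv.coe_coe] at h
  rw [h, LinearEquiv.apply_symm_apply, hl, LinearEquiv.symm_apply_apply, hr,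
    LinearEquiv.apply_symm_apply]

end KeyAux
end FMCAux

/-- The inner face maps `d̄_j` (multiplying adjacent `A`-factors) commute with `t_{p,q}`:
`d̄_j ∘ t_{p,q} = t_{p,q−1} ∘ d̄_j` for `0 ≤ j < q`; and the inner face maps `d_i`
(multiplying adjacent `B`-factors) commute with `t̄_{p,q}`:
`d_i ∘ t̄_{p,q} = t̄_{p−1,q} ∘ d_i` for `0 ≤ i < p`. -/
theorem face_maps_commute_with_cyclic_operators
    (k A B : Type) [Field k] [Ring A] [Algebra k A] [Ring B] [Algebra k B]
    (R : B ⊗[k] A ≃ₗ[k] A ⊗[k] B)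
    (hqt : Quasitriangular k A B R.toLinearMap)
    (hn : RNormal k A B R.toLinearMap) :
    (∀ (p q j : ℕ), j ≤ q →
      LinearMap.lTensor (TB k B p) (dmul k A q j) ∘ₗ tOp R.toLinearMap p (q+1)
        = tOp R.toLinearMap p q ∘ₗ LinearMap.lTensor (TB k B p) (dmul k A q j))
    ∧ (∀ (p q i : ℕ), i ≤ p →
      LinearMap.rTensor (TA k A q) (dmul k B p i) ∘ₗ tbarOp R.symm.toLinearMap (p+1) q
        = tbarOp R.symm.toLinearMap p q ∘ₗ LinearMap.rTensor (TA k A q) (dmul k B p i)) := by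
  obtain ⟨hqt1, hqt2⟩ := hqt
  refine ⟨fun p q j hj => ?_, fun p q i hi => ?_⟩
  · have key := keyTheta R.toLinearMap hqt2 q j hj
    match p with
    | 0 =>
      exact tAux0 (dmul k A q j) (Theta R.toLinearMap (q+1)) (Theta R.toLinearMap q) key
    | (p+1) =>
      exact tAux (dmul k A q j) (Theta R.toLinearMap (q+1)) (Theta R.toLinearMap q)
        (ePow k (ModuleCat.of k B) p).toLinearMap key
  · have hRi := hRinv R hqt1
    have key := keyTheta R.symm.toLinearMap hRi p i hi
    rw [← gammaEqTheta R.symm.toLinearMap p, ← gammaEqTheta R.symm.toLinearMap (p+1)] at key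
    match q with
    | 0 =>
      exact tbarAux0 (dmul k B p i) (Gamma R.symm.toLinearMap (p+1))
        (Gamma R.symm.toLinearMap p) key
    | (q+1) =>
      exact tbarAux (dmul k B p i) (Gamma R.symm.toLinearMap (p+1))
        (Gamma R.symm.toLinearMap p) (ePow k (ModuleCat.of k A) q).toLinearMap key
end

section
/- For every n ≥ 0, the k-linear maps Φ_n := R_{2n+1,2n+2} ∘ (R_{2n−1,2n} ∘ R_{2n,2n+1}) ∘ ⋯ ∘ (R_{1,2} ∘ R_{2,3} ∘ ⋯ ∘ R_{n+1,n+2}) : B^{⊗(n+1)} ⊗ A^{⊗(n+1)} → (A ⊗ B)^{⊗(n+1)} and Ψ_n := R⁻¹_{n+1,n+2} ∘ (R⁻¹_{n,n+1} ∘ R⁻¹_{n+2,n+3}) ∘ ⋯ ∘ (R⁻¹_{1,2} ∘ R⁻¹_{3,4} ∘ ⋯ ∘ R⁻¹_{2n+1,2n+2}) : (A ⊗ B)^{⊗(n+1)} → B^{⊗(n+1)} ⊗ A^{⊗(n+1)} are mutually inverse linear isomorphisms: Φ_n ∘ Ψ_n = id and Ψ_n ∘ Φ_n = id. Here the 2n+2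 tensor factors of B^{⊗(n+1)} ⊗ A^{⊗(n+1)} are ordered b₀,…,b_n,a₀,…,a_n, those of (A ⊗ B)^{⊗(n+1)} are ordered a₀,b₀,a₁,b₁,…,a_n,b_n, and a subscript (i,i+1) means the map is applied to the i-th and (i+1)-th tensor factors and the identity elsewhere. -/
/-!
Every `Ξ_p` is a composite of associators and of copies of `R` acting on two adjacent factors,
so it underlies a linear equivalence whose inverse is the reversed composite built from `R⁻¹`,
which is `Γ_p`. Since `Φ_{n+1}` is `Ξ_{n+1}` followed by associators and `id ⊗ Φ_n`, it too
underlies a linear equivalence, and its inverse is `Ψ_{n+1}`: the recursion for `Ψ_{n+1}`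
applies `R⁻¹` and `Γ_n` separately, and regrouping the tensor factors turns these two steps
into the single step `Γ_{n+1}`.
-/

open TensorProduct

variable (k : Type) [Field k]

variable (A B : Type) [Ring A] [Algebra k A] [Ring B] [Algebra k B]

variable {k A B}

/-- The `(n+1)`-fold tensor power of `A ⊗ B`. -/
noncomputable abbrev TAB (k A B : Type) [Field k] [Ring A] [Algebra k A] [Ring B] [Algebra k B]
    (n : ℕ) : Type := ↥(Tpow k (ModuleCat.of k (A ⊗[k] B)) n)

/-- `R_{1,2} ∘ R_{2,3} ∘ ⋯ ∘ R_{p+1,p+2} : B^{⊗(p+1)} ⊗ A → A ⊗ B^{⊗(p+1)}`, pulling the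
`A`-factor from the right end to the left end through `R`. -/
noncomputable def Xi {k A B : Type} [Field k] [Ring A] [Algebra k A] [Ring B] [Algebra k B]
    (R : B ⊗[k] A →ₗ[k] A ⊗[k] B) :
    ∀ p : ℕ, (TB k B p ⊗[k] A) →ₗ[k] (A ⊗[k] TB k B p)
  | 0 => R
  | (p+1) =>
      (TensorProduct.assoc k A B (TB k B p)).toLinearMap
      ∘ₗ LinearMap.rTensor (TB k B p) R
      ∘ₗ (TensorProduct.assoc k B A (TB k B p)).symm.toLinearMap
      ∘ₗ LinearMap.lTensor B (Xi R p)
      ∘ₗ (TensorProduct.assoc k B (TB k B p) A).toLinearMap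

/-- `Φ_n = R_{2n+1,2n+2}(R_{2n−1,2n}R_{2n,2n+1})⋯(R_{1,2}R_{2,3}⋯R_{n+1,n+2}) :
B^{⊗(n+1)} ⊗ A^{⊗(n+1)} → (A ⊗ B)^{⊗(n+1)}`. -/
noncomputable def Phi {k A B : Type} [Field k] [Ring A] [Algebra k A] [Ring B] [Algebra k B]
    (R : B ⊗[k] A →ₗ[k] A ⊗[k] B) :
    ∀ n : ℕ, (TB k B n ⊗[k] TA k A n) →ₗ[k] TAB k A B n
  | 0 => R
  | (p+1) =>
      LinearMap.lTensor (A ⊗[k] B) (Phi R p)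
      ∘ₗ (TensorProduct.assoc k A B (TB k B p ⊗[k] TA k A p)).symm.toLinearMap
      ∘ₗ LinearMap.lTensor A (TensorProduct.assoc k B (TB k B p) (TA k A p)).toLinearMap
      ∘ₗ (TensorProduct.assoc k A (TB k B (p+1)) (TA k A p)).toLinearMap
      ∘ₗ LinearMap.rTensor (TA k A p) (Xi R (p+1))
      ∘ₗ (TensorProduct.assoc k (TB k B (p+1)) A (TA k A p)).symm.toLinearMap

/-- `Ψ_n = R⁻¹_{n+1,n+2}(R⁻¹_{n,n+1}R⁻¹_{n+2,n+3})⋯(R⁻¹_{1,2}R⁻¹_{3,4}⋯R⁻¹_{2n+1,2n+2}) :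
(A ⊗ B)^{⊗(n+1)} → B^{⊗(n+1)} ⊗ A^{⊗(n+1)}`. -/
noncomputable def Psi {k A B : Type} [Field k] [Ring A] [Algebra k A] [Ring B] [Algebra k B]
    (Ri : A ⊗[k] B →ₗ[k] B ⊗[k] A) :
    ∀ n : ℕ, TAB k A B n →ₗ[k] (TB k B n ⊗[k] TA k A n)
  | 0 => Ri
  | (p+1) =>
      (TensorProduct.assoc k B (TB k B p) (A ⊗[k] TA k A p)).symm.toLinearMap
      ∘ₗ LinearMap.lTensor B (TensorProduct.assoc k (TB k B p) A (TA k A p)).toLinearMap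
      ∘ₗ LinearMap.lTensor B (LinearMap.rTensor (TA k A p) (Gamma Ri p))
      ∘ₗ LinearMap.lTensor B (TensorProduct.assoc k A (TB k B p) (TA k A p)).symm.toLinearMap
      ∘ₗ (TensorProduct.assoc k B A (TB k B p ⊗[k] TA k A p)).toLinearMap
      ∘ₗ LinearMap.rTensor (TB k B p ⊗[k] TA k A p) Ri
      ∘ₗ LinearMap.lTensor (A ⊗[k] B) (Psi Ri p)


namespace TensorProduct

variable {R M N P Q : Type*} [CommSemiring R] [AddCommMonoid M] [AddCommMonoid N]
  [AddCommMonoid P] [AddCommMonoid Q] [Module R M] [Module R N] [Module R P] [Module R Q]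

theorem lTensor_rTensor_comp_rTensor_reassoc (r : M ⊗[R] N →ₗ[R] N ⊗[R] M)
    (g : M ⊗[R] P →ₗ[R] P ⊗[R] M) :
    (TensorProduct.assoc R N P (M ⊗[R] Q)).symm.toLinearMap
      ∘ₗ LinearMap.lTensor N (TensorProduct.assoc R P M Q).toLinearMap
      ∘ₗ LinearMap.lTensor N (LinearMap.rTensor Q g)
      ∘ₗ LinearMap.lTensor N (TensorProduct.assoc R M P Q).symm.toLinearMap
      ∘ₗ (TensorProduct.assoc R N M (P ⊗[R] Q)).toLinearMap
      ∘ₗ LinearMap.rTensor (P ⊗[R] Q) r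
    = (TensorProduct.assoc R (N ⊗[R] P) M Q).toLinearMap
      ∘ₗ LinearMap.rTensor Q
          ((TensorProduct.assoc R N P M).symm.toLinearMap
            ∘ₗ LinearMap.lTensor N g
            ∘ₗ (TensorProduct.assoc R N M P).toLinearMap
            ∘ₗ LinearMap.rTensor P r
            ∘ₗ (TensorProduct.assoc R M N P).symm.toLinearMap)
      ∘ₗ (TensorProduct.assoc R M (N ⊗[R] P) Q).symm.toLinearMap
      ∘ₗ LinearMap.lTensor M (TensorProduct.assoc R N P Q).symm.toLinearMap
      ∘ₗ (TensorProduct.assoc R M N (P ⊗[R] Q)).toLinearMap := by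
  refine ext_fourfold' fun m n p q => ?_
  simp only [LinearMap.comp_apply, LinearEquiv.coe_coe, assoc_tmul, assoc_symm_tmul,
    LinearMap.lTensor_tmul, LinearMap.rTensor_tmul]
  induction r (m ⊗ₜ n) using TensorProduct.induction_on with
  | zero => simp only [zero_tmul, map_zero]
  | add x y hx hy => simp only [add_tmul, map_add, hx, hy]
  | tmul n' m' =>
    simp only [LinearEquiv.coe_coe, assoc_tmul, assoc_symm_tmul, LinearMap.lTensor_tmul,
      LinearMap.rTensor_tmul]
    induction g (m' ⊗ₜ p) using TensorProduct.induction_on with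
    | zero => simp only [zero_tmul, tmul_zero, map_zero]
    | add x y hx hy => simp only [add_tmul, tmul_add, map_add, hx, hy]
    | tmul _ _ => rfl

end TensorProduct

noncomputable def xiEquiv (R : B ⊗[k] A ≃ₗ[k] A ⊗[k] B) :
    ∀ p : ℕ, (TB k B p ⊗[k] A) ≃ₗ[k] (A ⊗[k] TB k B p)
  | 0 => R
  | (p+1) =>
      TensorProduct.assoc k B (TB k B p) A
      ≪≫ₗ (xiEquiv R p).lTensor B
      ≪≫ₗ (TensorProduct.assoc k B A (TB k B p)).symm
      ≪≫ₗ R.rTensor (TB k B p)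
      ≪≫ₗ TensorProduct.assoc k A B (TB k B p)

theorem xiEquiv_toLinearMap (R : B ⊗[k] A ≃ₗ[k] A ⊗[k] B) :
    ∀ p : ℕ, (xiEquiv R p).toLinearMap = Xi R.toLinearMap p
  | 0 => rfl
  | (p+1) => by rw [Xi, ← xiEquiv_toLinearMap R p]; rfl

theorem xiEquiv_symm_toLinearMap (R : B ⊗[k] A ≃ₗ[k] A ⊗[k] B) :
    ∀ p : ℕ, (xiEquiv R p).symm.toLinearMap = Gamma R.symm.toLinearMap p
  | 0 => rfl
  | (p+1) => by rw [Gamma, ← xiEquiv_symm_toLinearMap R p]; rfl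

theorem Psi_succ (Ri : A ⊗[k] B →ₗ[k] B ⊗[k] A) (p : ℕ) :
    Psi Ri (p+1) = (TensorProduct.assoc k (TB k B (p+1)) A (TA k A p)).toLinearMap
        ∘ₗ LinearMap.rTensor (TA k A p) (Gamma Ri (p+1))
        ∘ₗ (TensorProduct.assoc k A (TB k B (p+1)) (TA k A p)).symm.toLinearMap
        ∘ₗ LinearMap.lTensor A (TensorProduct.assoc k B (TB k B p) (TA k A p)).symm.toLinearMap
        ∘ₗ (TensorProduct.assoc k A B (TB k B p ⊗[k] TA k A p)).toLinearMap
        ∘ₗ LinearMap.lTensor (A ⊗[k] B) (Psi Ri p) :=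
  congrArg (· ∘ₗ LinearMap.lTensor (A ⊗[k] B) (Psi Ri p))
    (TensorProduct.lTensor_rTensor_comp_rTensor_reassoc Ri (Gamma Ri p))

noncomputable def phiEquiv (R : B ⊗[k] A ≃ₗ[k] A ⊗[k] B) :
    ∀ n : ℕ, (TB k B n ⊗[k] TA k A n) ≃ₗ[k] TAB k A B n
  | 0 => R
  | (p+1) =>
      (TensorProduct.assoc k (TB k B (p+1)) A (TA k A p)).symm
      ≪≫ₗ (xiEquiv R (p+1)).rTensor (TA k A p)
      ≪≫ₗ TensorProduct.assoc k A (TB k B (p+1)) (TA k A p)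
      ≪≫ₗ (TensorProduct.assoc k B (TB k B p) (TA k A p)).lTensor A
      ≪≫ₗ (TensorProduct.assoc k A B (TB k B p ⊗[k] TA k A p)).symm
      ≪≫ₗ (phiEquiv R p).lTensor (A ⊗[k] B)

theorem phiEquiv_toLinearMap (R : B ⊗[k] A ≃ₗ[k] A ⊗[k] B) :
    ∀ n : ℕ, (phiEquiv R n).toLinearMap = Phi R.toLinearMap n
  | 0 => rfl
  | (p+1) => by rw [Phi, ← phiEquiv_toLinearMap R p, ← xiEquiv_toLinearMap]; rfl

theorem phiEquiv_symm_toLinearMap (R : B ⊗[k] A ≃ₗ[k] A ⊗[k] B) :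
    ∀ n : ℕ, (phiEquiv R n).symm.toLinearMap = Psi R.symm.toLinearMap n
  | 0 => rfl
  | (p+1) => by
    rw [Psi_succ, ← phiEquiv_symm_toLinearMap R p, ← xiEquiv_symm_toLinearMap]; rfl

theorem Phi_Psi_inverse_general
    (k A B : Type) [Field k] [Ring A] [Algebra k A] [Ring B] [Algebra k B]
    (R : B ⊗[k] A ≃ₗ[k] A ⊗[k] B)
    (n : ℕ) :
    Phi R.toLinearMap n ∘ₗ Psi R.symm.toLinearMap n = LinearMap.id
    ∧ Psi R.symm.toLinearMap n ∘ₗ Phi R.toLinearMap n = LinearMap.id := by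
  rw [← phiEquiv_toLinearMap, ← phiEquiv_symm_toLinearMap]
  exact ⟨(phiEquiv R n).comp_symm, (phiEquiv R n).symm_comp⟩

/-- `Φ_n` and `Ψ_n` are mutually inverse linear isomorphisms between
`B^{⊗(n+1)} ⊗ A^{⊗(n+1)}` and `(A ⊗ B)^{⊗(n+1)}`. -/
theorem Phi_Psi_inverse
    (k A B : Type) [Field k] [Ring A] [Algebra k A] [Ring B] [Algebra k B]
    (R : B ⊗[k] A ≃ₗ[k] A ⊗[k] B)
    (hqt : Quasitriangular k A B R.toLinearMap)
    (hn : RNormal k A B R.toLinearMap)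
    (n : ℕ) :
    Phi R.toLinearMap n ∘ₗ Psi R.symm.toLinearMap n = LinearMap.id
    ∧ Psi R.symm.toLinearMap n ∘ₗ Phi R.toLinearMap n = LinearMap.id :=
  Phi_Psi_inverse_general k A B R n
end

section
/- For each n ≥ 0, the vector space C_n := B^{⊗(n+1)} ⊗ A is an A-bimodule under the left action a · (b₀⊗⋯⊗b_n⊗a₀) := (id_B^{⊗(n+1)} ⊗ m_A)(Γ_n(a ⊗ b₀⊗⋯⊗b_n) ⊗ a₀) and the right action (b₀⊗⋯⊗b_n⊗a₀) · a := b₀⊗⋯⊗b_n⊗(a₀a); that is, 1_A · x = x = x · 1_A, a · (a' · x) = (aa') · x, (x · a) · a' = x · (aa'), and (a · x) · a' = a · (x · a') for all a, a' ∈ A and x ∈ C_n. -/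
open TensorProduct

variable (k : Type) [Field k]

variable (A B : Type) [Ring A] [Algebra k A] [Ring B] [Algebra k B]

variable {k A B}

/-- The left `A`-action `a · (b₀⊗⋯⊗b_n⊗a₀) = (id^{⊗(n+1)} ⊗ m_A)(Γ_n(a ⊗ b₀⊗⋯⊗b_n) ⊗ a₀)`
on `C_n = B^{⊗(n+1)} ⊗ A`, as a linear map `A ⊗ C_n → C_n`. -/
noncomputable def leftAct {k A B : Type} [Field k] [Ring A] [Algebra k A] [Ring B] [Algebra k B]
    (Ri : A ⊗[k] B →ₗ[k] B ⊗[k] A) (n : ℕ) :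
    (A ⊗[k] (TB k B n ⊗[k] A)) →ₗ[k] (TB k B n ⊗[k] A) :=
  LinearMap.lTensor (TB k B n) (LinearMap.mul' k A)
  ∘ₗ (TensorProduct.assoc k (TB k B n) A A).toLinearMap
  ∘ₗ LinearMap.rTensor A (Gamma Ri n)
  ∘ₗ (TensorProduct.assoc k A (TB k B n) A).symm.toLinearMap

/-- The right `A`-action `(b₀⊗⋯⊗b_n⊗a₀) · a = b₀⊗⋯⊗b_n⊗(a₀a)` on `C_n = B^{⊗(n+1)} ⊗ A`,
as a linear map `C_n ⊗ A → C_n`. -/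
noncomputable def rightAct {k A B : Type} [Field k] [Ring A] [Algebra k A] [Ring B] [Algebra k B]
    (n : ℕ) : ((TB k B n ⊗[k] A) ⊗[k] A) →ₗ[k] (TB k B n ⊗[k] A) :=
  LinearMap.lTensor (TB k B n) (LinearMap.mul' k A)
  ∘ₗ (TensorProduct.assoc k (TB k B n) A A).toLinearMap

/-!
Call a linear map `G : A ⊗ M → M ⊗ A` unital and multiplicative if it transports `1_A` and
`m_A` across `M`, i.e. `G (1 ⊗ m) = m ⊗ 1` and `G (a a' ⊗ m) = a · G (a' ⊗ m)`, where
`a · (m ⊗ c) := G (a ⊗ m) c`. For such `G` this left action and right multiplication on the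
last factor make `M ⊗ A` an `A`-bimodule. Normality and the second quasitriangularity identity
say exactly that `R⁻¹ : A ⊗ B → B ⊗ A` is unital and multiplicative, and both properties
survive the composite `A ⊗ M ⊗ N → M ⊗ A ⊗ N → M ⊗ N ⊗ A` of two such maps. As `Γ_{p+1}` is
this composite of `R⁻¹` and `Γ_p`, every `Γ_n` is unital and multiplicative.
-/

namespace TwistedTensor

variable {k A M N : Type*} [CommSemiring k] [Semiring A] [Algebra k A]
  [AddCommMonoid M] [Module k M] [AddCommMonoid N] [Module k N]

variable (k A M) in
noncomputable def rightMul : (M ⊗[k] A) ⊗[k] A →ₗ[k] M ⊗[k] A :=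
  LinearMap.lTensor M (LinearMap.mul' k A) ∘ₗ (TensorProduct.assoc k M A A).toLinearMap

@[simp]
lemma rightMul_tmul (m : M) (c a : A) :
    rightMul k A M ((m ⊗ₜ[k] c) ⊗ₜ[k] a) = m ⊗ₜ[k] (c * a) := by
  simp [rightMul]

lemma rightMul_one (x : M ⊗[k] A) : rightMul k A M (x ⊗ₜ[k] (1 : A)) = x := by
  induction x using TensorProduct.induction_on with
  | zero => simp
  | tmul m c => simp
  | add x y hx hy => rw [TensorProduct.add_tmul, map_add, hx, hy]

lemma rightMul_rightMul (x : M ⊗[k] A) (a a' : A) :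
    rightMul k A M (rightMul k A M (x ⊗ₜ[k] a) ⊗ₜ[k] a') = rightMul k A M (x ⊗ₜ[k] (a * a')) := by
  induction x using TensorProduct.induction_on with
  | zero => simp
  | tmul m c => simp [mul_assoc]
  | add x y hx hy => simp only [TensorProduct.add_tmul, map_add, hx, hy]

lemma assoc_symm_tmul_rightMul (m : M) (z : N ⊗[k] A) (a : A) :
    (TensorProduct.assoc k M N A).symm (m ⊗ₜ[k] rightMul k A N (z ⊗ₜ[k] a))
      = rightMul k A (M ⊗[k] N) ((TensorProduct.assoc k M N A).symm (m ⊗ₜ[k] z) ⊗ₜ[k] a) := by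
  induction z using TensorProduct.induction_on with
  | zero => simp
  | tmul n c => simp
  | add x y hx hy => simp only [TensorProduct.add_tmul, TensorProduct.tmul_add, map_add, hx, hy]

noncomputable def leftMul (G : A ⊗[k] M →ₗ[k] M ⊗[k] A) : A ⊗[k] (M ⊗[k] A) →ₗ[k] M ⊗[k] A :=
  LinearMap.lTensor M (LinearMap.mul' k A)
  ∘ₗ (TensorProduct.assoc k M A A).toLinearMap
  ∘ₗ LinearMap.rTensor A G
  ∘ₗ (TensorProduct.assoc k A M A).symm.toLinearMap

@[simp]
lemma leftMul_tmul (G : A ⊗[k] M →ₗ[k] M ⊗[k] A) (a : A) (m : M) (c : A) :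
    leftMul G (a ⊗ₜ[k] (m ⊗ₜ[k] c)) = rightMul k A M (G (a ⊗ₜ[k] m) ⊗ₜ[k] c) := by
  simp [leftMul, rightMul]

lemma rightMul_leftMul (G : A ⊗[k] M →ₗ[k] M ⊗[k] A) (a : A) (x : M ⊗[k] A) (a' : A) :
    rightMul k A M (leftMul G (a ⊗ₜ[k] x) ⊗ₜ[k] a')
      = leftMul G (a ⊗ₜ[k] rightMul k A M (x ⊗ₜ[k] a')) := by
  induction x using TensorProduct.induction_on with
  | zero => simp
  | tmul m c => simp [rightMul_rightMul]
  | add x y hx hy => simp only [TensorProduct.add_tmul, TensorProduct.tmul_add, map_add, hx, hy]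

def IsUnital (G : A ⊗[k] M →ₗ[k] M ⊗[k] A) : Prop :=
  ∀ m : M, G ((1 : A) ⊗ₜ[k] m) = m ⊗ₜ[k] (1 : A)

def IsMultiplicative (G : A ⊗[k] M →ₗ[k] M ⊗[k] A) : Prop :=
  ∀ (a a' : A) (m : M), G ((a * a') ⊗ₜ[k] m) = leftMul G (a ⊗ₜ[k] G (a' ⊗ₜ[k] m))

lemma IsUnital.leftMul_one {G : A ⊗[k] M →ₗ[k] M ⊗[k] A} (hG : IsUnital G) (x : M ⊗[k] A) :
    leftMul G ((1 : A) ⊗ₜ[k] x) = x := by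
  induction x using TensorProduct.induction_on with
  | zero => simp
  | tmul m c => simp [hG m]
  | add x y hx hy => rw [TensorProduct.tmul_add, map_add, hx, hy]

lemma IsMultiplicative.leftMul_leftMul {G : A ⊗[k] M →ₗ[k] M ⊗[k] A} (hG : IsMultiplicative G)
    (a a' : A) (x : M ⊗[k] A) :
    leftMul G (a ⊗ₜ[k] leftMul G (a' ⊗ₜ[k] x)) = leftMul G ((a * a') ⊗ₜ[k] x) := by
  induction x using TensorProduct.induction_on with
  | zero => simp
  | tmul m c => rw [leftMul_tmul, leftMul_tmul, hG, rightMul_leftMul]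
  | add x y hx hy => simp only [TensorProduct.tmul_add, map_add, hx, hy]


noncomputable def passRight (H : A ⊗[k] N →ₗ[k] N ⊗[k] A) :
    (M ⊗[k] A) ⊗[k] N →ₗ[k] (M ⊗[k] N) ⊗[k] A :=
  (TensorProduct.assoc k M N A).symm.toLinearMap
  ∘ₗ LinearMap.lTensor M H
  ∘ₗ (TensorProduct.assoc k M A N).toLinearMap

@[simp]
lemma passRight_tmul (H : A ⊗[k] N →ₗ[k] N ⊗[k] A) (m : M) (c : A) (n : N) :
    passRight H ((m ⊗ₜ[k] c) ⊗ₜ[k] n)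
      = (TensorProduct.assoc k M N A).symm (m ⊗ₜ[k] H (c ⊗ₜ[k] n)) := by
  simp [passRight]

noncomputable def twistTensor (G : A ⊗[k] M →ₗ[k] M ⊗[k] A) (H : A ⊗[k] N →ₗ[k] N ⊗[k] A) :
    A ⊗[k] (M ⊗[k] N) →ₗ[k] (M ⊗[k] N) ⊗[k] A :=
  (TensorProduct.assoc k M N A).symm.toLinearMap
  ∘ₗ LinearMap.lTensor M H
  ∘ₗ (TensorProduct.assoc k M A N).toLinearMap
  ∘ₗ LinearMap.rTensor N G
  ∘ₗ (TensorProduct.assoc k A M N).symm.toLinearMap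

lemma twistTensor_tmul (G : A ⊗[k] M →ₗ[k] M ⊗[k] A) (H : A ⊗[k] N →ₗ[k] N ⊗[k] A)
    (a : A) (m : M) (n : N) :
    twistTensor G H (a ⊗ₜ[k] (m ⊗ₜ[k] n)) = passRight H (G (a ⊗ₜ[k] m) ⊗ₜ[k] n) := by
  simp [twistTensor, passRight]

/-- `(m ⊗ c) ⊗ y ↦ m ⊗ (c · y)`, which identifies `(M ⊗ A) ⊗_A (N ⊗ A)` with `M ⊗ N ⊗ A`. -/
noncomputable def mulMiddle (H : A ⊗[k] N →ₗ[k] N ⊗[k] A) :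
    (M ⊗[k] A) ⊗[k] (N ⊗[k] A) →ₗ[k] (M ⊗[k] N) ⊗[k] A :=
  (TensorProduct.assoc k M N A).symm.toLinearMap
  ∘ₗ LinearMap.lTensor M (leftMul H)
  ∘ₗ (TensorProduct.assoc k M A (N ⊗[k] A)).toLinearMap

@[simp]
lemma mulMiddle_tmul (H : A ⊗[k] N →ₗ[k] N ⊗[k] A) (m : M) (c : A) (y : N ⊗[k] A) :
    mulMiddle H ((m ⊗ₜ[k] c) ⊗ₜ[k] y)
      = (TensorProduct.assoc k M N A).symm (m ⊗ₜ[k] leftMul H (c ⊗ₜ[k] y)) := by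
  simp [mulMiddle]

lemma rightMul_passRight (H : A ⊗[k] N →ₗ[k] N ⊗[k] A) (v : M ⊗[k] A) (n : N) (a : A) :
    rightMul k A (M ⊗[k] N) (passRight H (v ⊗ₜ[k] n) ⊗ₜ[k] a)
      = mulMiddle H (v ⊗ₜ[k] (n ⊗ₜ[k] a)) := by
  induction v using TensorProduct.induction_on with
  | zero => simp
  | tmul m c => simp [assoc_symm_tmul_rightMul]
  | add x y hx hy => simp only [TensorProduct.add_tmul, map_add, hx, hy]

lemma IsMultiplicative.passRight_rightMul {H : A ⊗[k] N →ₗ[k] N ⊗[k] A}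
    (hH : IsMultiplicative H) (v : M ⊗[k] A) (c : A) (n : N) :
    passRight H (rightMul k A M (v ⊗ₜ[k] c) ⊗ₜ[k] n) = mulMiddle H (v ⊗ₜ[k] H (c ⊗ₜ[k] n)) := by
  induction v using TensorProduct.induction_on with
  | zero => simp
  | tmul m d => simp [hH d c n]
  | add x y hx hy => simp only [TensorProduct.add_tmul, map_add, hx, hy]

lemma leftMul_twistTensor_assoc_symm (G : A ⊗[k] M →ₗ[k] M ⊗[k] A)
    (H : A ⊗[k] N →ₗ[k] N ⊗[k] A) (a : A) (m : M) (y : N ⊗[k] A) :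
    leftMul (twistTensor G H) (a ⊗ₜ[k] (TensorProduct.assoc k M N A).symm (m ⊗ₜ[k] y))
      = mulMiddle H (G (a ⊗ₜ[k] m) ⊗ₜ[k] y) := by
  induction y using TensorProduct.induction_on with
  | zero => simp
  | tmul n c => simp [twistTensor_tmul, rightMul_passRight]
  | add x y hx hy => simp only [TensorProduct.tmul_add, map_add, hx, hy]

lemma IsMultiplicative.passRight_leftMul {H : A ⊗[k] N →ₗ[k] N ⊗[k] A}
    (hH : IsMultiplicative H) (G : A ⊗[k] M →ₗ[k] M ⊗[k] A) (a : A) (u : M ⊗[k] A) (n : N) :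
    passRight H (leftMul G (a ⊗ₜ[k] u) ⊗ₜ[k] n)
      = leftMul (twistTensor G H) (a ⊗ₜ[k] passRight H (u ⊗ₜ[k] n)) := by
  induction u using TensorProduct.induction_on with
  | zero => simp
  | tmul m c =>
    rw [leftMul_tmul, hH.passRight_rightMul, passRight_tmul, leftMul_twistTensor_assoc_symm]
  | add x y hx hy => simp only [TensorProduct.add_tmul, TensorProduct.tmul_add, map_add, hx, hy]

lemma IsUnital.twistTensor {G : A ⊗[k] M →ₗ[k] M ⊗[k] A} {H : A ⊗[k] N →ₗ[k] N ⊗[k] A}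
    (hG : IsUnital G) (hH : IsUnital H) : IsUnital (twistTensor G H) := by
  intro x
  induction x using TensorProduct.induction_on with
  | zero => simp
  | tmul m n => simp [twistTensor_tmul, hG m, hH n]
  | add x y hx hy => simp only [TensorProduct.tmul_add, TensorProduct.add_tmul, map_add, hx, hy]

lemma IsMultiplicative.twistTensor {G : A ⊗[k] M →ₗ[k] M ⊗[k] A}
    {H : A ⊗[k] N →ₗ[k] N ⊗[k] A} (hG : IsMultiplicative G) (hH : IsMultiplicative H) :
    IsMultiplicative (twistTensor G H) := by
  intro a a' x
  induction x using TensorProduct.induction_on with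
  | zero => simp
  | tmul m n => rw [twistTensor_tmul, twistTensor_tmul, hG, hH.passRight_leftMul]
  | add x y hx hy => simp only [TensorProduct.tmul_add, map_add, hx, hy]

end TwistedTensor

open TwistedTensor

lemma RNormal.isUnital_symm {R : B ⊗[k] A ≃ₗ[k] A ⊗[k] B} (hn : RNormal k A B R.toLinearMap) :
    IsUnital R.symm.toLinearMap :=
  fun b => R.symm_apply_eq.mpr (hn.2 b).symm

lemma Quasitriangular.isMultiplicative_symm {R : B ⊗[k] A ≃ₗ[k] A ⊗[k] B}
    (hqt : Quasitriangular k A B R.toLinearMap) : IsMultiplicative R.symm.toLinearMap := by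
  intro a a' b
  refine R.symm_apply_eq.mpr ?_
  -- evaluate the identity at the argument of `id_B ⊗ m_A` inside `leftMul`: each `R` then
  -- cancels an `R⁻¹`
  have h := LinearMap.congr_fun hqt.2
    ((TensorProduct.assoc k B A A) (LinearMap.rTensor A R.symm.toLinearMap
      ((TensorProduct.assoc k A B A).symm (a ⊗ₜ[k] R.symm (a' ⊗ₜ[k] b)))))
  simp only [LinearMap.coe_comp, LinearEquiv.coe_coe, Function.comp_apply,
    LinearEquiv.symm_apply_apply, ← LinearMap.rTensor_comp_apply, LinearEquiv.comp_coe,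
    LinearEquiv.symm_trans_self, LinearEquiv.refl_toLinearMap, LinearMap.rTensor_id,
    LinearMap.id_coe, id_eq, LinearEquiv.apply_symm_apply, LinearMap.lTensor_tmul,
    TensorProduct.assoc_symm_tmul, LinearMap.rTensor_tmul, LinearMap.mul'_apply] at h
  exact h.symm

lemma gamma_succ (Ri : A ⊗[k] B →ₗ[k] B ⊗[k] A) (p : ℕ) :
    Gamma Ri (p + 1) = twistTensor Ri (Gamma Ri p) :=
  rfl

lemma isUnital_gamma {Ri : A ⊗[k] B →ₗ[k] B ⊗[k] A} (h : IsUnital Ri) :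
    ∀ p, IsUnital (Gamma Ri p)
  | 0 => h
  | p + 1 => by
    rw [gamma_succ]
    exact IsUnital.twistTensor h (isUnital_gamma h p)

lemma isMultiplicative_gamma {Ri : A ⊗[k] B →ₗ[k] B ⊗[k] A} (h : IsMultiplicative Ri) :
    ∀ p, IsMultiplicative (Gamma Ri p)
  | 0 => h
  | p + 1 => by
    rw [gamma_succ]
    exact IsMultiplicative.twistTensor h (isMultiplicative_gamma h p)

lemma leftAct_eq_leftMul (Ri : A ⊗[k] B →ₗ[k] B ⊗[k] A) (n : ℕ) :
    leftAct Ri n = leftMul (Gamma Ri n) :=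
  rfl

lemma rightAct_eq_rightMul (n : ℕ) :
    rightAct (k := k) (A := A) (B := B) n = rightMul k A (TB k B n) :=
  rfl

/-- `C_n = B^{⊗(n+1)} ⊗ A` is an `A`-bimodule for the left action
`a · (b₀⊗⋯⊗b_n⊗a₀) = (id^{⊗(n+1)} ⊗ m_A)(Γ_n(a ⊗ b₀⊗⋯⊗b_n) ⊗ a₀)` and the right action
`(b₀⊗⋯⊗b_n⊗a₀) · a = b₀⊗⋯⊗b_n⊗(a₀a)`. -/
theorem Cn_is_A_bimodule
    (k A B : Type) [Field k] [Ring A] [Algebra k A] [Ring B] [Algebra k B]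
    (R : B ⊗[k] A ≃ₗ[k] A ⊗[k] B)
    (hqt : Quasitriangular k A B R.toLinearMap)
    (hn : RNormal k A B R.toLinearMap)
    (n : ℕ) :
    (∀ x : TB k B n ⊗[k] A, leftAct R.symm.toLinearMap n ((1 : A) ⊗ₜ[k] x) = x)
    ∧ (∀ x : TB k B n ⊗[k] A, rightAct n (x ⊗ₜ[k] (1 : A)) = x)
    ∧ (∀ (a a' : A) (x : TB k B n ⊗[k] A),
        leftAct R.symm.toLinearMap n (a ⊗ₜ[k] leftAct R.symm.toLinearMap n (a' ⊗ₜ[k] x))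
          = leftAct R.symm.toLinearMap n ((a * a') ⊗ₜ[k] x))
    ∧ (∀ (a a' : A) (x : TB k B n ⊗[k] A),
        rightAct n (rightAct (k := k) (A := A) (B := B) n (x ⊗ₜ[k] a) ⊗ₜ[k] a')
          = rightAct n (x ⊗ₜ[k] (a * a')))
    ∧ (∀ (a a' : A) (x : TB k B n ⊗[k] A),
        rightAct n (leftAct R.symm.toLinearMap n (a ⊗ₜ[k] x) ⊗ₜ[k] a')
          = leftAct R.symm.toLinearMap n (a ⊗ₜ[k] rightAct n (x ⊗ₜ[k] a'))) := by
  have hunit := isUnital_gamma hn.isUnital_symm n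
  have hmul := isMultiplicative_gamma hqt.isMultiplicative_symm n
  simp only [leftAct_eq_leftMul, rightAct_eq_rightMul]
  exact ⟨IsUnital.leftMul_one hunit, rightMul_one, IsMultiplicative.leftMul_leftMul hmul,
    fun a a' x => rightMul_rightMul x a a', fun a a' x => rightMul_leftMul _ a x a'⟩
end

section
/- Let (B, H) be a matched pair of Hopf algebras over a field k in which the antipodes S_B and S_H are bijective. Then for all h ∈ H and b ∈ B: (1) S_B⁻¹(h ▷ b) = Σ (h ◁ b₍₂₎) ▷ S_B⁻¹(b₍₁₎), and (2) S_H⁻¹(h ◁ b) = Σ S_H⁻¹(h₍₂₎) ◁ (h₍₁₎ ▷ b). -/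
/-!
Work in the convolution algebra `Hom(H ⊗ B, Bᵐᵒᵖ)`. Since `▷` is a coalgebra map and
`op ∘ S_B⁻¹` is a convolution inverse of `op : B → Bᵐᵒᵖ`, `S_B⁻¹ ∘ ▷` is a right inverse of `▷`. The candidate `h ⊗ b ↦ Σ (h ◁ b₍₂₎) ▷ S_B⁻¹(b₍₁₎)` is a left inverse: after
coassociativity and the compatibility condition, the rule for `h ▷ (bc)` collapses the sum to
`Σ h ▷ (b₍₂₎ S_B⁻¹(b₍₁₎)) = ε(h)ε(b)`. Inverses in a monoid agree.
The identity for `S_H⁻¹` is the mirror image, in `Hom(H ⊗ B, Hᵐᵒᵖ)` with the rule for `(hg) ◁ b`.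
-/

open TensorProduct

section MatchedPair

variable (k B H : Type) [Field k] [Ring B] [HopfAlgebra k B] [Ring H] [HopfAlgebra k H]

/-- `(B, H)` is a *matched pair* of Hopf algebras: `B` is a left `H`-module coalgebra via
`actL` (`h ⊗ b ↦ h ▷ b`), `H` is a right `B`-module coalgebra via `actR` (`h ⊗ b ↦ h ◁ b`),
and the compatibility conditions of Majid hold. -/
structure MatchedPair (actL : H ⊗[k] B →ₗ[k] B) (actR : H ⊗[k] B →ₗ[k] H) : Prop where
  /-- `1_H ▷ b = b` -/
  one_actL : ∀ b : B, actL ((1 : H) ⊗ₜ[k] b) = b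
  /-- `(gh) ▷ b = g ▷ (h ▷ b)` -/
  mul_actL : ∀ (g h : H) (b : B), actL ((g * h) ⊗ₜ[k] b) = actL (g ⊗ₜ[k] actL (h ⊗ₜ[k] b))
  /-- `h ◁ 1_B = h` -/
  actR_unit : ∀ h : H, actR (h ⊗ₜ[k] (1 : B)) = h
  /-- `h ◁ (bc) = (h ◁ b) ◁ c` -/
  actR_mul' : ∀ (h : H) (b c : B), actR (h ⊗ₜ[k] (b * c)) = actR (actR (h ⊗ₜ[k] b) ⊗ₜ[k] c)
  /-- `Δ_B(h ▷ b) = Σ (h₍₁₎ ▷ b₍₁₎) ⊗ (h₍₂₎ ▷ b₍₂₎)` -/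
  comul_actL : Coalgebra.comul (R := k) ∘ₗ actL
    = TensorProduct.map actL actL
      ∘ₗ (TensorProduct.tensorTensorTensorComm k H H B B).toLinearMap
      ∘ₗ TensorProduct.map (Coalgebra.comul (R := k)) (Coalgebra.comul (R := k))
  /-- `ε_B(h ▷ b) = ε_H(h)ε_B(b)` -/
  counit_actL : Coalgebra.counit (R := k) ∘ₗ actL
    = (TensorProduct.lid k k).toLinearMap
      ∘ₗ TensorProduct.map (Coalgebra.counit (R := k)) (Coalgebra.counit (R := k))
  /-- `Δ_H(h ◁ b) = Σ (h₍₁₎ ◁ b₍₁₎) ⊗ (h₍₂₎ ◁ b₍₂₎)` -/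
  comul_actR : Coalgebra.comul (R := k) ∘ₗ actR
    = TensorProduct.map actR actR
      ∘ₗ (TensorProduct.tensorTensorTensorComm k H H B B).toLinearMap
      ∘ₗ TensorProduct.map (Coalgebra.comul (R := k)) (Coalgebra.comul (R := k))
  /-- `ε_H(h ◁ b) = ε_H(h)ε_B(b)` -/
  counit_actR : Coalgebra.counit (R := k) ∘ₗ actR
    = (TensorProduct.lid k k).toLinearMap
      ∘ₗ TensorProduct.map (Coalgebra.counit (R := k)) (Coalgebra.counit (R := k))
  /-- `h ▷ 1_B = ε_H(h)1_B` -/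
  actL_one : ∀ h : H, actL (h ⊗ₜ[k] (1 : B)) = Coalgebra.counit (R := k) h • (1 : B)
  /-- `1_H ◁ b = ε_B(b)1_H` -/
  one_actR : ∀ b : B, actR ((1 : H) ⊗ₜ[k] b) = Coalgebra.counit (R := k) b • (1 : H)
  /-- `h ▷ (bc) = Σ (h₍₁₎ ▷ b₍₁₎)((h₍₂₎ ◁ b₍₂₎) ▷ c)` -/
  actL_mul : actL ∘ₗ LinearMap.lTensor H (LinearMap.mul' k B)
    = LinearMap.mul' k B
      ∘ₗ TensorProduct.map actL
          (actL ∘ₗ LinearMap.rTensor B actR ∘ₗ (TensorProduct.assoc k H B B).symm.toLinearMap)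
      ∘ₗ (TensorProduct.tensorTensorTensorComm k H H B (B ⊗[k] B)).toLinearMap
      ∘ₗ LinearMap.lTensor (H ⊗[k] H) (TensorProduct.assoc k B B B).toLinearMap
      ∘ₗ LinearMap.rTensor ((B ⊗[k] B) ⊗[k] B) (Coalgebra.comul (R := k))
      ∘ₗ LinearMap.lTensor H (LinearMap.rTensor B (Coalgebra.comul (R := k)))
  /-- `(hg) ◁ b = Σ (h ◁ (g₍₁₎ ▷ b₍₁₎))(g₍₂₎ ◁ b₍₂₎)` -/
  mul_actR : actR ∘ₗ LinearMap.rTensor B (LinearMap.mul' k H)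
    = LinearMap.mul' k H
      ∘ₗ TensorProduct.map (actR ∘ₗ LinearMap.lTensor H actL) actR
      ∘ₗ (TensorProduct.assoc k H (H ⊗[k] B) (H ⊗[k] B)).symm.toLinearMap
      ∘ₗ LinearMap.lTensor H (TensorProduct.tensorTensorTensorComm k H H B B).toLinearMap
      ∘ₗ (TensorProduct.assoc k H (H ⊗[k] H) (B ⊗[k] B)).toLinearMap
      ∘ₗ LinearMap.rTensor (B ⊗[k] B) (LinearMap.lTensor H (Coalgebra.comul (R := k)))
      ∘ₗ LinearMap.lTensor (H ⊗[k] H) (Coalgebra.comul (R := k))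
  /-- `Σ (h₍₁₎ ◁ b₍₁₎) ⊗ (h₍₂₎ ▷ b₍₂₎) = Σ (h₍₂₎ ◁ b₍₂₎) ⊗ (h₍₁₎ ▷ b₍₁₎)` -/
  compat : TensorProduct.map actR actL
      ∘ₗ (TensorProduct.tensorTensorTensorComm k H H B B).toLinearMap
      ∘ₗ TensorProduct.map (Coalgebra.comul (R := k)) (Coalgebra.comul (R := k))
    = TensorProduct.map actR actL
      ∘ₗ (TensorProduct.tensorTensorTensorComm k H H B B).toLinearMap
      ∘ₗ TensorProduct.map
          ((TensorProduct.comm k H H).toLinearMap ∘ₗ Coalgebra.comul (R := k))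
          ((TensorProduct.comm k B B).toLinearMap ∘ₗ Coalgebra.comul (R := k))

end MatchedPair

open Coalgebra HopfAlgebra WithConv MulOpposite

section InverseAntipode

variable {k A : Type*} [CommSemiring k] [Semiring A] [HopfAlgebra k A] (S' : A →ₗ[k] A)
  (hS'S : S' ∘ₗ antipode k = LinearMap.id) (hSS' : antipode k ∘ₗ S' = LinearMap.id)
include hS'S hSS'

lemma sum_invAntipode_right_mul_left {a : A} {ι : Type*} (r : Repr k a ι) :
    ∑ i ∈ r.index, S' (r.right i) * r.left i = algebraMap k A (counit a) := by
  apply Function.LeftInverse.injective (g := S') (LinearMap.congr_fun hS'S)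
  simp only [map_sum, antipode_mul_antidistrib, ← LinearMap.comp_apply, hSS', LinearMap.id_apply,
    sum_antipode_mul_eq_algebraMap_counit, Algebra.algebraMap_eq_smul_one, map_smul, antipode_one]

lemma sum_right_mul_invAntipode_left {a : A} {ι : Type*} (r : Repr k a ι) :
    ∑ i ∈ r.index, r.right i * S' (r.left i) = algebraMap k A (counit a) := by
  apply Function.LeftInverse.injective (g := S') (LinearMap.congr_fun hS'S)
  simp only [map_sum, antipode_mul_antidistrib, ← LinearMap.comp_apply, hSS', LinearMap.id_apply,
    sum_mul_antipode_eq_algebraMap_counit, Algebra.algebraMap_eq_smul_one, map_smul, antipode_one]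

variable {C : Type*} [AddCommMonoid C] [Module k C] [Coalgebra k C] (φ : C →ₗc[k] A)

lemma op_comp_convMul_op_comp_invAntipode_comp :
    toConv ((opLinearEquiv k).toLinearMap ∘ₗ φ.toLinearMap)
      * toConv ((opLinearEquiv k).toLinearMap ∘ₗ S' ∘ₗ φ.toLinearMap) = 1 := by
  refine WithConv.ext <| LinearMap.ext fun x => ?_
  rw [(ℛ k x).convMul_apply]
  simpa using congr(op $(sum_invAntipode_right_mul_left S' hS'S hSS' ((ℛ k x).induced φ)))

lemma op_comp_invAntipode_comp_convMul_op_comp :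
    toConv ((opLinearEquiv k).toLinearMap ∘ₗ S' ∘ₗ φ.toLinearMap)
      * toConv ((opLinearEquiv k).toLinearMap ∘ₗ φ.toLinearMap) = 1 := by
  refine WithConv.ext <| LinearMap.ext fun x => ?_
  rw [(ℛ k x).convMul_apply]
  simpa using congr(op $(sum_right_mul_invAntipode_left S' hS'S hSS' ((ℛ k x).induced φ)))

end InverseAntipode

section TwistedActions

variable {k B H : Type*} [CommSemiring k] [AddCommMonoid B] [Module k B] [AddCommMonoid H]
  [Module k H]
  (actL : H ⊗[k] B →ₗ[k] B) (actR : H ⊗[k] B →ₗ[k] H)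

/-- `h ⊗ b ↦ Σ (h ◁ b₍₂₎) ▷ S'(b₍₁₎)` -/
def twistedActL [CoalgebraStruct k B] (S' : B →ₗ[k] B) : H ⊗[k] B →ₗ[k] B :=
  actL ∘ₗ LinearMap.lTensor H S' ∘ₗ LinearMap.rTensor B actR
    ∘ₗ (TensorProduct.assoc k H B B).symm.toLinearMap
    ∘ₗ LinearMap.lTensor H ((TensorProduct.comm k B B).toLinearMap ∘ₗ comul)

/-- `h ⊗ b ↦ Σ S'(h₍₂₎) ◁ (h₍₁₎ ▷ b)` -/
def twistedActR [CoalgebraStruct k H] (S' : H →ₗ[k] H) : H ⊗[k] B →ₗ[k] H :=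
  actR ∘ₗ LinearMap.rTensor B S' ∘ₗ LinearMap.lTensor H actL
    ∘ₗ (TensorProduct.assoc k H H B).toLinearMap
    ∘ₗ LinearMap.rTensor B ((TensorProduct.comm k H H).toLinearMap ∘ₗ comul)

variable {actL actR}

lemma twistedActL_tmul [CoalgebraStruct k B] (S' : B →ₗ[k] B) (g : H) {c : B} {ι : Type*}
    (rc : Repr k c ι) :
    twistedActL actL actR S' (g ⊗ₜ[k] c)
      = ∑ m ∈ rc.index, actL (actR (g ⊗ₜ[k] rc.right m) ⊗ₜ[k] S' (rc.left m)) := by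
  simp [twistedActL, ← rc.eq, TensorProduct.tmul_sum]

lemma twistedActR_tmul [CoalgebraStruct k H] (S' : H →ₗ[k] H) {g : H} (c : B) {ι : Type*}
    (rg : Repr k g ι) :
    twistedActR actL actR S' (g ⊗ₜ[k] c)
      = ∑ m ∈ rg.index, actR (S' (rg.right m) ⊗ₜ[k] actL (rg.left m ⊗ₜ[k] c)) := by
  simp [twistedActR, ← rg.eq, TensorProduct.sum_tmul]

end TwistedActions

namespace MatchedPair

variable {k B H : Type} [Field k] [Ring B] [HopfAlgebra k B] [Ring H] [HopfAlgebra k H]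
  {actL : H ⊗[k] B →ₗ[k] B} {actR : H ⊗[k] B →ₗ[k] H}

def actLCoalgHom (hmp : MatchedPair k B H actL actR) : H ⊗[k] B →ₗc[k] B where
  toLinearMap := actL
  counit_comp := by rw [hmp.counit_actL]; ext; simp [mul_comm]
  map_comp_comul := hmp.comul_actL.symm

def actRCoalgHom (hmp : MatchedPair k B H actL actR) : H ⊗[k] B →ₗc[k] H where
  toLinearMap := actR
  counit_comp := by rw [hmp.counit_actR]; ext; simp [mul_comm]
  map_comp_comul := hmp.comul_actR.symm

variable (hmp : MatchedPair k B H actL actR)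
include hmp

lemma sum_actR_tmul_actL_comm {g : H} {c : B} {ι κ : Type*} (rg : Repr k g ι) (rc : Repr k c κ) :
    ∑ i ∈ rg.index, ∑ j ∈ rc.index,
        actR (rg.left i ⊗ₜ[k] rc.left j) ⊗ₜ[k] actL (rg.right i ⊗ₜ[k] rc.right j)
      = ∑ i ∈ rg.index, ∑ j ∈ rc.index,
        actR (rg.right i ⊗ₜ[k] rc.right j) ⊗ₜ[k] actL (rg.left i ⊗ₜ[k] rc.left j) := by
  have hc := LinearMap.congr_fun hmp.compat (g ⊗ₜ[k] c)
  simp only [LinearMap.comp_apply, LinearEquiv.coe_coe, TensorProduct.map_tmul, ← rg.eq, ← rc.eq,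
    TensorProduct.sum_tmul, TensorProduct.tmul_sum, map_sum,
    TensorProduct.tensorTensorTensorComm_tmul, TensorProduct.comm_tmul] at hc
  exact Finset.sum_comm.trans (hc.trans Finset.sum_comm)

lemma actL_tmul_mul (g : H) (c z : B) {ι κ : Type*} (rg : Repr k g ι) (rc : Repr k c κ) :
    actL (g ⊗ₜ[k] (c * z)) = ∑ i ∈ rg.index, ∑ j ∈ rc.index,
      actL (rg.left i ⊗ₜ[k] rc.left j) * actL (actR (rg.right i ⊗ₜ[k] rc.right j) ⊗ₜ[k] z) := by
  have hc := LinearMap.congr_fun hmp.actL_mul (g ⊗ₜ[k] (c ⊗ₜ[k] z))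
  simp only [LinearMap.comp_apply, LinearEquiv.coe_coe, LinearMap.lTensor_tmul,
    LinearMap.rTensor_tmul, LinearMap.mul'_apply, TensorProduct.map_tmul, ← rg.eq, ← rc.eq,
    TensorProduct.sum_tmul, TensorProduct.tmul_sum, map_sum,
    TensorProduct.tensorTensorTensorComm_tmul, TensorProduct.assoc_tmul,
    TensorProduct.assoc_symm_tmul] at hc
  exact hc.trans Finset.sum_comm

lemma actR_mul_tmul (g f : H) (c : B) {ι κ : Type*} (rf : Repr k f ι) (rc : Repr k c κ) :
    actR ((g * f) ⊗ₜ[k] c) = ∑ i ∈ rf.index, ∑ j ∈ rc.index,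
      actR (g ⊗ₜ[k] actL (rf.left i ⊗ₜ[k] rc.left j)) * actR (rf.right i ⊗ₜ[k] rc.right j) := by
  have hc := LinearMap.congr_fun hmp.mul_actR ((g ⊗ₜ[k] f) ⊗ₜ[k] c)
  simp only [LinearMap.comp_apply, LinearEquiv.coe_coe, LinearMap.lTensor_tmul,
    LinearMap.rTensor_tmul, LinearMap.mul'_apply, TensorProduct.map_tmul, ← rf.eq, ← rc.eq,
    TensorProduct.sum_tmul, TensorProduct.tmul_sum, map_sum,
    TensorProduct.tensorTensorTensorComm_tmul, TensorProduct.assoc_tmul,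
    TensorProduct.assoc_symm_tmul] at hc
  exact hc.trans Finset.sum_comm

lemma sum_actL_mul_twistedActL (SB' : B →ₗ[k] B)
    (hSB1 : SB' ∘ₗ antipode k (A := B) = LinearMap.id)
    (hSB2 : antipode k (A := B) ∘ₗ SB' = LinearMap.id) (h : H) (b : B) :
    ∑ i ∈ (ℛ k h).index, ∑ j ∈ (ℛ k b).index,
        actL ((ℛ k h).right i ⊗ₜ[k] (ℛ k b).right j)
          * twistedActL actL actR SB' ((ℛ k h).left i ⊗ₜ[k] (ℛ k b).left j)
      = algebraMap k B (counit h * counit b) := by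
  set rh := ℛ k h
  set rb := ℛ k b
  let rb₁ j := ℛ k (rb.left j)
  let rb₂ j := ℛ k (rb.right j)
  let Ψ i : B ⊗[k] (B ⊗[k] B) →ₗ[k] B :=
    LinearMap.mul' k B ∘ₗ (TensorProduct.comm k B B).toLinearMap
      ∘ₗ TensorProduct.map
          (actL ∘ₗ TensorProduct.map (actR ∘ₗ TensorProduct.mk k H B (rh.left i)) SB'
            ∘ₗ (TensorProduct.comm k B B).toLinearMap)
          (actL ∘ₗ TensorProduct.mk k H B (rh.right i))
      ∘ₗ (TensorProduct.assoc k B B B).symm.toLinearMap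
  have hΨ i x y z : Ψ i (x ⊗ₜ[k] (y ⊗ₜ[k] z))
      = actL (rh.right i ⊗ₜ[k] z) * actL (actR (rh.left i ⊗ₜ[k] y) ⊗ₜ[k] SB' x) := rfl
  let N j : H ⊗[k] B →ₗ[k] B :=
    LinearMap.mul' k B ∘ₗ (TensorProduct.comm k B B).toLinearMap
      ∘ₗ TensorProduct.map (actL ∘ₗ (TensorProduct.mk k H B).flip (SB' (rb.left j))) LinearMap.id
  have hN j u v : N j (u ⊗ₜ[k] v) = v * actL (u ⊗ₜ[k] SB' (rb.left j)) := rfl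
  calc _ = ∑ i ∈ rh.index, ∑ j ∈ rb.index, ∑ m ∈ (rb₁ j).index,
          Ψ i ((rb₁ j).left m ⊗ₜ[k] ((rb₁ j).right m ⊗ₜ[k] rb.right j)) := by
        simp only [twistedActL_tmul SB' _ (rb₁ _), Finset.mul_sum, hΨ]
    _ = ∑ i ∈ rh.index, ∑ j ∈ rb.index, ∑ m ∈ (rb₂ j).index,
          Ψ i (rb.left j ⊗ₜ[k] ((rb₂ j).left m ⊗ₜ[k] (rb₂ j).right m)) := by
        simp only [← map_sum, sum_tmul_tmul_eq rb rb₁ rb₂]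
    _ = ∑ j ∈ rb.index, N j (∑ i ∈ rh.index, ∑ m ∈ (rb₂ j).index,
          actR (rh.left i ⊗ₜ[k] (rb₂ j).left m) ⊗ₜ[k] actL (rh.right i ⊗ₜ[k] (rb₂ j).right m)) := by
        rw [Finset.sum_comm]
        simp only [map_sum, hΨ, hN]
    _ = ∑ j ∈ rb.index, N j (∑ i ∈ rh.index, ∑ m ∈ (rb₂ j).index,
          actR (rh.right i ⊗ₜ[k] (rb₂ j).right m) ⊗ₜ[k] actL (rh.left i ⊗ₜ[k] (rb₂ j).left m)) := by
        simp only [hmp.sum_actR_tmul_actL_comm rh]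
    _ = ∑ j ∈ rb.index, actL (h ⊗ₜ[k] (rb.right j * SB' (rb.left j))) := by
        simp only [hmp.actL_tmul_mul h _ _ rh (rb₂ _), map_sum, hN]
    _ = actL (h ⊗ₜ[k] algebraMap k B (counit b)) := by
        rw [← sum_right_mul_invAntipode_left SB' hSB1 hSB2 rb, TensorProduct.tmul_sum, map_sum]
    _ = algebraMap k B (counit h * counit b) := by
        rw [Algebra.algebraMap_eq_smul_one, TensorProduct.tmul_smul, map_smul, hmp.actL_one,
          Algebra.algebraMap_eq_smul_one, smul_smul, mul_comm]

lemma sum_twistedActR_mul_actR (SH' : H →ₗ[k] H)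
    (hSH1 : SH' ∘ₗ antipode k (A := H) = LinearMap.id)
    (hSH2 : antipode k (A := H) ∘ₗ SH' = LinearMap.id) (h : H) (b : B) :
    ∑ i ∈ (ℛ k h).index, ∑ j ∈ (ℛ k b).index,
        twistedActR actL actR SH' ((ℛ k h).right i ⊗ₜ[k] (ℛ k b).right j)
          * actR ((ℛ k h).left i ⊗ₜ[k] (ℛ k b).left j)
      = algebraMap k H (counit h * counit b) := by
  set rh := ℛ k h
  set rb := ℛ k b
  let rh₁ i := ℛ k (rh.left i)
  let rh₂ i := ℛ k (rh.right i)
  let Ψ j : H ⊗[k] (H ⊗[k] H) →ₗ[k] H :=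
    LinearMap.mul' k H ∘ₗ (TensorProduct.comm k H H).toLinearMap
      ∘ₗ TensorProduct.map (actR ∘ₗ (TensorProduct.mk k H B).flip (rb.left j))
          (actR ∘ₗ TensorProduct.map SH' (actL ∘ₗ (TensorProduct.mk k H B).flip (rb.right j))
            ∘ₗ (TensorProduct.comm k H H).toLinearMap)
  have hΨ j x y z : Ψ j (x ⊗ₜ[k] (y ⊗ₜ[k] z))
      = actR (SH' z ⊗ₜ[k] actL (y ⊗ₜ[k] rb.right j)) * actR (x ⊗ₜ[k] rb.left j) := rfl
  let N i : H ⊗[k] B →ₗ[k] H :=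
    LinearMap.mul' k H ∘ₗ (TensorProduct.comm k H H).toLinearMap
      ∘ₗ TensorProduct.map LinearMap.id (actR ∘ₗ TensorProduct.mk k H B (SH' (rh.right i)))
  have hN i u v : N i (u ⊗ₜ[k] v) = actR (SH' (rh.right i) ⊗ₜ[k] v) * u := rfl
  calc _ = ∑ j ∈ rb.index, ∑ i ∈ rh.index, ∑ m ∈ (rh₂ i).index,
          Ψ j (rh.left i ⊗ₜ[k] ((rh₂ i).left m ⊗ₜ[k] (rh₂ i).right m)) := by
        rw [Finset.sum_comm]
        simp only [twistedActR_tmul SH' _ (rh₂ _), Finset.sum_mul, hΨ]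
    _ = ∑ j ∈ rb.index, ∑ i ∈ rh.index, ∑ m ∈ (rh₁ i).index,
          Ψ j ((rh₁ i).left m ⊗ₜ[k] ((rh₁ i).right m ⊗ₜ[k] rh.right i)) := by
        simp only [← map_sum, sum_tmul_tmul_eq rh rh₁ rh₂]
    _ = ∑ i ∈ rh.index, N i (∑ m ∈ (rh₁ i).index, ∑ j ∈ rb.index,
          actR ((rh₁ i).left m ⊗ₜ[k] rb.left j) ⊗ₜ[k] actL ((rh₁ i).right m ⊗ₜ[k] rb.right j)) := by
        rw [Finset.sum_comm]
        refine Finset.sum_congr rfl fun i _ => ?_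
        rw [Finset.sum_comm]
        simp only [map_sum, hΨ, hN]
    _ = ∑ i ∈ rh.index, N i (∑ m ∈ (rh₁ i).index, ∑ j ∈ rb.index,
          actR ((rh₁ i).right m ⊗ₜ[k] rb.right j) ⊗ₜ[k] actL ((rh₁ i).left m ⊗ₜ[k] rb.left j)) := by
        simp only [hmp.sum_actR_tmul_actL_comm _ rb]
    _ = ∑ i ∈ rh.index, actR ((SH' (rh.right i) * rh.left i) ⊗ₜ[k] b) := by
        simp only [hmp.actR_mul_tmul _ _ b (rh₁ _) rb, map_sum, hN]
    _ = actR (algebraMap k H (counit h) ⊗ₜ[k] b) := by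
        rw [← sum_invAntipode_right_mul_left SH' hSH1 hSH2 rh, TensorProduct.sum_tmul, map_sum]
    _ = algebraMap k H (counit h * counit b) := by
        rw [Algebra.algebraMap_eq_smul_one, ← TensorProduct.smul_tmul', map_smul, hmp.one_actR,
          Algebra.algebraMap_eq_smul_one, smul_smul]

lemma twistedActL_convMul_actL (SB' : B →ₗ[k] B)
    (hSB1 : SB' ∘ₗ antipode k (A := B) = LinearMap.id)
    (hSB2 : antipode k (A := B) ∘ₗ SB' = LinearMap.id) :
    toConv ((opLinearEquiv k).toLinearMap ∘ₗ twistedActL actL actR SB')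
      * toConv ((opLinearEquiv k).toLinearMap ∘ₗ actL)
      = (1 : WithConv (H ⊗[k] B →ₗ[k] Bᵐᵒᵖ)) := by
  refine WithConv.ext <| TensorProduct.ext' fun h b => ?_
  rw [((ℛ k h).tmul (ℛ k b)).convMul_apply]
  simpa [Finset.sum_product, mul_comm] using
    congr(op $(hmp.sum_actL_mul_twistedActL SB' hSB1 hSB2 h b))

lemma actR_convMul_twistedActR (SH' : H →ₗ[k] H)
    (hSH1 : SH' ∘ₗ antipode k (A := H) = LinearMap.id)
    (hSH2 : antipode k (A := H) ∘ₗ SH' = LinearMap.id) :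
    toConv ((opLinearEquiv k).toLinearMap ∘ₗ actR)
      * toConv ((opLinearEquiv k).toLinearMap ∘ₗ twistedActR actL actR SH')
      = (1 : WithConv (H ⊗[k] B →ₗ[k] Hᵐᵒᵖ)) := by
  refine WithConv.ext <| TensorProduct.ext' fun h b => ?_
  rw [((ℛ k h).tmul (ℛ k b)).convMul_apply]
  simpa [Finset.sum_product, mul_comm] using
    congr(op $(hmp.sum_twistedActR_mul_actR SH' hSH1 hSH2 h b))

end MatchedPair

/-- For a matched pair `(B, H)` of Hopf algebras with bijective antipodes (with two-sided
inverses `S_B'`, `S_H'`):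
`S_B⁻¹(h ▷ b) = Σ (h ◁ b₍₂₎) ▷ S_B⁻¹(b₍₁₎)` and
`S_H⁻¹(h ◁ b) = Σ S_H⁻¹(h₍₂₎) ◁ (h₍₁₎ ▷ b₍₁₎)` — stated as equalities of linear maps
`H ⊗ B → B` resp. `H ⊗ B → H`. -/
theorem matchedPair_antipode_inverse_identities
    (k B H : Type) [Field k] [Ring B] [HopfAlgebra k B] [Ring H] [HopfAlgebra k H]
    (actL : H ⊗[k] B →ₗ[k] B) (actR : H ⊗[k] B →ₗ[k] H)
    (hmp : MatchedPair k B H actL actR)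
    (SB' : B →ₗ[k] B) (SH' : H →ₗ[k] H)
    (hSB1 : SB' ∘ₗ HopfAlgebra.antipode (R := k) (A := B) = LinearMap.id)
    (hSB2 : HopfAlgebra.antipode (R := k) (A := B) ∘ₗ SB' = LinearMap.id)
    (hSH1 : SH' ∘ₗ HopfAlgebra.antipode (R := k) (A := H) = LinearMap.id)
    (hSH2 : HopfAlgebra.antipode (R := k) (A := H) ∘ₗ SH' = LinearMap.id) :
    (SB' ∘ₗ actL
      = actL
        ∘ₗ LinearMap.lTensor H SB'
        ∘ₗ LinearMap.rTensor B actR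
        ∘ₗ (TensorProduct.assoc k H B B).symm.toLinearMap
        ∘ₗ LinearMap.lTensor H
            ((TensorProduct.comm k B B).toLinearMap ∘ₗ Coalgebra.comul (R := k)))
    ∧ (SH' ∘ₗ actR
      = actR
        ∘ₗ LinearMap.rTensor B SH'
        ∘ₗ LinearMap.lTensor H actL
        ∘ₗ (TensorProduct.assoc k H H B).toLinearMap
        ∘ₗ LinearMap.rTensor B
            ((TensorProduct.comm k H H).toLinearMap ∘ₗ Coalgebra.comul (R := k))) := by
  constructor
  · have h := left_inv_eq_right_inv (hmp.twistedActL_convMul_actL SB' hSB1 hSB2)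
      (op_comp_convMul_op_comp_invAntipode_comp SB' hSB1 hSB2 hmp.actLCoalgHom)
    exact LinearMap.ext fun x => (op_injective congr($h x)).symm
  · have h := left_inv_eq_right_inv
      (op_comp_invAntipode_comp_convMul_op_comp SH' hSH1 hSH2 hmp.actRCoalgHom)
      (hmp.actR_convMul_twistedActR SH' hSH1 hSH2)
    exact LinearMap.ext fun x => op_injective congr($h x)
end
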